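/- arXiv:1809.06250 — 9 statements merged into one kernel-verified Lean document; each statement's English description precedes it below -/
import Mathlib

section
/- Let T : ℝⁿ → ℝⁿ be nonexpansive with a nonempty fixed point set F(T), let S : ℝⁿ → ℝⁿ be an η-contraction with η ∈ [0,1), and let β ∈ (0,1). Suppose z ∈ F(T) satisfies ⟨S(z) − z, x − z⟩ ≤ 0 for all x ∈ F(T). Let {α_n} ⊂ (0,1) satisfy α_n → 0 and ∑ α_n = ∞, and let {θ_n} ⊂ [0,1) satisfy (θ_n/α_n)·‖x_n − x_{n−1}‖ → 0. Given x_0, x_1 ∈ ℝⁿ, define for n ≥ 1: y_n = x_n + θ_n(x_n − x_{n−1}) and x_{n+1} = α_n S(y_n) + (1 − α_n)(1 − β) y_n + β(1 − α_n) T(y_n). Then x_n → z as n → ∞. -/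
open Filter RealInnerProductSpace


lemma combo_sq {E : Type*} [NormedAddCommGroup E] [InnerProductSpace ℝ E] (β : ℝ) (a b : E) :
    ‖(1-β) • a + β • b‖^2 = (1-β)*‖a‖^2 + β*‖b‖^2 - β*(1-β)*‖a-b‖^2 := by
  rw [norm_add_sq_real, norm_sub_sq_real, real_inner_smul_left, real_inner_smul_right,
    norm_smul, norm_smul, mul_pow, mul_pow, Real.norm_eq_abs, Real.norm_eq_abs, sq_abs, sq_abs]
  ring

lemma xu_lemma (a γ τ : ℕ → ℝ) (N0 : ℕ) (ha : ∀ n, 0 ≤ a n)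
    (hγ : ∀ n, 0 < γ n) (hγ1 : ∀ n, γ n ≤ 1)
    (hγsum : Tendsto (fun N => ∑ i ∈ Finset.range N, γ i) atTop atTop)
    (hrec : ∀ n ≥ N0, a (n+1) ≤ (1 - γ n) * a n + γ n * τ n)
    (hτ : ∀ ε > 0, ∀ᶠ n in atTop, τ n ≤ ε) :
    Tendsto a atTop (nhds 0) := by
  rw [Metric.tendsto_atTop]
  intro ε hε
  have hε3 : 0 < ε/3 := by linarith
  obtain ⟨N1, hN1⟩ := (hτ (ε/3) hε3).exists_forall_of_atTop
  set N := max N0 N1 with hN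
  set P : ℕ → ℝ := fun k => ∏ i ∈ Finset.range k, (1 - γ (N + i)) with hP
  have hPnonneg : ∀ k, 0 ≤ P k := by
    intro k
    apply Finset.prod_nonneg
    intro i _
    linarith [hγ1 (N + i)]
  have hkey : ∀ k, a (N + k) ≤ ε/3 + P k * a N := by
    intro k
    induction k with
    | zero => simp [hP]; linarith [ha N]
    | succ k ih =>
      have h1 : N + k ≥ N0 := le_trans (le_max_left _ _) (Nat.le_add_right _ _)
      have h2 : τ (N + k) ≤ ε/3 := hN1 (N + k) (le_trans (le_max_right _ _) (Nat.le_add_right _ _))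
      have h3 := hrec (N + k) h1
      have h4 : 0 ≤ 1 - γ (N + k) := by linarith [hγ1 (N + k)]
      have h5 : a (N + (k+1)) = a ((N + k) + 1) := by ring_nf
      rw [h5]
      have h6 : P (k+1) = P k * (1 - γ (N + k)) := Finset.prod_range_succ _ _
      calc a ((N+k)+1) ≤ (1 - γ (N+k)) * a (N+k) + γ (N+k) * τ (N+k) := h3
        _ ≤ (1 - γ (N+k)) * (ε/3 + P k * a N) + γ (N+k) * (ε/3) := by
            have := hγ (N+k)
            nlinarith [ha (N+k)]
        _ = ε/3 + (P k * (1 - γ (N+k))) * a N := by ring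
        _ = ε/3 + P (k+1) * a N := by rw [h6]
  have hPle : ∀ k, P k ≤ Real.exp (-(∑ i ∈ Finset.range k, γ (N+i))) := by
    intro k
    have : -(∑ i ∈ Finset.range k, γ (N+i)) = ∑ i ∈ Finset.range k, (-(γ (N+i))) := by
      rw [Finset.sum_neg_distrib]
    rw [this, Real.exp_sum]
    apply Finset.prod_le_prod
    · intro i _; linarith [hγ1 (N + i)]
    · intro i _
      have := Real.add_one_le_exp (-(γ (N+i)))
      linarith
  have hsum' : Tendsto (fun k => ∑ i ∈ Finset.range k, γ (N+i)) atTop atTop := by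
    have h1 : ∀ k, ∑ i ∈ Finset.range k, γ (N+i) = (∑ i ∈ Finset.range (k+N), γ i) - ∑ i ∈ Finset.range N, γ i := by
      intro k
      have h2 := Finset.sum_Ico_eq_sum_range (f := γ) (m := N) (n := k + N)
      have h3 : k + N - N = k := by omega
      rw [h3] at h2
      rw [← h2, Finset.sum_Ico_eq_sub _ (Nat.le_add_left _ _)]
    simp_rw [h1, sub_eq_add_neg]
    exact tendsto_atTop_add_const_right _ _ (hγsum.comp (tendsto_add_atTop_nat N))
  have hPexp : Tendsto (fun k => Real.exp (-(∑ i ∈ Finset.range k, γ (N+i)))) atTop (nhds 0) :=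
    Real.tendsto_exp_atBot.comp (tendsto_neg_atBot_iff.mpr hsum')
  have hP0 : Tendsto P atTop (nhds 0) := squeeze_zero hPnonneg hPle hPexp
  have hPa : Tendsto (fun k => P k * a N) atTop (nhds 0) := by
    simpa using hP0.mul_const (a N)
  rw [Metric.tendsto_atTop] at hPa
  obtain ⟨K, hK⟩ := hPa (ε/3) hε3
  refine ⟨N + K, fun n hn => ?_⟩
  have hn' : n = N + (n - N) := by omega
  have h6 : n - N ≥ K := by omega
  have h7 := hkey (n - N)
  have h8 := hK (n - N) h6
  rw [Real.dist_eq, sub_zero] at h8 ⊢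
  rw [abs_of_nonneg (ha n)]
  have h9 : P (n - N) * a N < ε/3 := lt_of_abs_lt h8
  rw [← hn'] at h7
  linarith

lemma mainge_psi (a : ℕ → ℝ) (h : ∀ N, ∃ n ≥ N, a n < a (n+1)) :
    ∃ ψ : ℕ → ℕ, Tendsto ψ atTop atTop ∧
      (∀ᶠ n in atTop, a (ψ n) < a (ψ n + 1) ∧ a n ≤ a (ψ n + 1)) ∧
      Tendsto (fun n => ψ n + 1) atTop atTop := by
  classical
  set F : ℕ → Finset ℕ := fun n => (Finset.range (n+1)).filter (fun k => a k < a (k+1)) with hF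
  obtain ⟨n1, _, hn1bump⟩ := h 0
  have hFne : ∀ n ≥ n1, (F n).Nonempty := by
    intro n hn
    exact ⟨n1, Finset.mem_filter.mpr ⟨Finset.mem_range.mpr (by omega), hn1bump⟩⟩
  set ψ : ℕ → ℕ := fun n => if hne : (F n).Nonempty then (F n).max' hne else 0 with hψ
  have hmem : ∀ n ≥ n1, ψ n ∈ F n := by
    intro n hn
    simp only [hψ, dif_pos (hFne n hn)]
    exact (F n).max'_mem _
  have hle : ∀ n ≥ n1, ψ n ≤ n := by
    intro n hn
    have := hmem n hn
    rw [hF, Finset.mem_filter, Finset.mem_range] at this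
    omega
  have hbump : ∀ n ≥ n1, a (ψ n) < a (ψ n + 1) := by
    intro n hn
    have := hmem n hn
    rw [hF, Finset.mem_filter] at this
    exact this.2
  have hmax : ∀ n ≥ n1, ∀ k ≤ n, a k < a (k+1) → k ≤ ψ n := by
    intro n hn k hk hbk
    have hkF : k ∈ F n := Finset.mem_filter.mpr ⟨Finset.mem_range.mpr (by omega), hbk⟩
    simp only [hψ, dif_pos (hFne n hn)]
    exact Finset.le_max' _ _ hkF
  -- decreasing after ψ n
  have hdec : ∀ n ≥ n1, ∀ j, ψ n + 1 + j ≤ n → a (ψ n + 1 + j) ≤ a (ψ n + 1) := by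
    intro n hn j
    induction j with
    | zero => intro _; simp
    | succ j ih =>
      intro hjn
      have h1 : ψ n + 1 + j ≤ n := by omega
      have h2 := ih h1
      have h3 : ¬ (a (ψ n + 1 + j) < a (ψ n + 1 + j + 1)) := by
        intro hcon
        have := hmax n hn (ψ n + 1 + j) h1 hcon
        omega
      push_neg at h3
      have h4 : ψ n + 1 + (j+1) = (ψ n + 1 + j) + 1 := by omega
      rw [h4]
      linarith
  have hdom : ∀ n ≥ n1, a n ≤ a (ψ n + 1) := by
    intro n hn
    rcases eq_or_lt_of_le (hle n hn) with heq | hlt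
    · have hb := hbump n hn
      rw [heq] at hb ⊢
      linarith
    · have h1 : ψ n + 1 + (n - (ψ n + 1)) = n := by omega
      have := hdec n hn (n - (ψ n + 1)) (by omega)
      rwa [h1] at this
  have htend : Tendsto ψ atTop atTop := by
    rw [tendsto_atTop_atTop]
    intro m
    obtain ⟨k, hk, hbk⟩ := h (max m n1)
    refine ⟨k, fun n hn => ?_⟩
    have hn1 : n ≥ n1 := le_trans (le_trans (le_max_right _ _) hk) hn
    have := hmax n hn1 k (by omega) hbk
    omega
  refine ⟨ψ, htend, ?_, ?_⟩
  · filter_upwards [eventually_ge_atTop n1] with n hn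
    exact ⟨hbump n hn, hdom n hn⟩
  · exact (tendsto_add_atTop_nat 1).comp htend

lemma cluster_aux {d : ℕ} (T : EuclideanSpace ℝ (Fin d) → EuclideanSpace ℝ (Fin d))
    (hTc : Continuous T) (v z : EuclideanSpace ℝ (Fin d))
    (hv : ∀ w, T w = w → ⟪v, w - z⟫ ≤ 0)
    (g : ℕ → EuclideanSpace ℝ (Fin d)) (R : ℝ) (hgR : ∀ n, ‖g n - z‖ ≤ R)
    (hfix : Tendsto (fun n => ‖g n - T (g n)‖) atTop (nhds 0))
    {ε : ℝ} (hε : 0 < ε) : ∀ᶠ n in atTop, ⟪v, g n - z⟫ ≤ ε := by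
  by_contra hcon
  rw [not_eventually] at hcon
  have hcon' : ∃ᶠ n in atTop, ε < ⟪v, g n - z⟫ := by
    apply hcon.mono
    intro n hn
    push_neg at hn
    exact hn
  obtain ⟨φ, hφmono, hφ⟩ := extraction_of_frequently_atTop hcon'
  have hball : ∀ n, g (φ n) ∈ Metric.closedBall z R := by
    intro n
    rw [Metric.mem_closedBall, dist_eq_norm]
    exact hgR (φ n)
  obtain ⟨w, _, ξ, hξmono, hξ⟩ :=
    tendsto_subseq_of_bounded Metric.isBounded_closedBall hball
  have hcomp : Tendsto (fun k => φ (ξ k)) atTop atTop :=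
    hφmono.tendsto_atTop.comp hξmono.tendsto_atTop
  -- w is a fixed point
  have hfix2 : Tendsto (fun k => ‖g (φ (ξ k)) - T (g (φ (ξ k)))‖) atTop (nhds 0) :=
    hfix.comp hcomp
  have hcont : Tendsto (fun k => ‖g (φ (ξ k)) - T (g (φ (ξ k)))‖) atTop (nhds ‖w - T w‖) := by
    have : Continuous (fun u : EuclideanSpace ℝ (Fin d) => ‖u - T u‖) :=
      (continuous_id.sub hTc).norm
    exact (this.tendsto w).comp hξ
  have hw : T w = w := by
    have h0 : ‖w - T w‖ = 0 := tendsto_nhds_unique hcont hfix2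
    rw [norm_eq_zero, sub_eq_zero] at h0
    exact h0.symm
  -- inner products converge
  have hinner : Tendsto (fun k => ⟪v, g (φ (ξ k)) - z⟫) atTop (nhds ⟪v, w - z⟫) := by
    have : Continuous (fun u : EuclideanSpace ℝ (Fin d) => ⟪v, u - z⟫) :=
      continuous_const.inner (continuous_id.sub continuous_const)
    exact (this.tendsto w).comp hξ
  have hge : ε ≤ ⟪v, w - z⟫ :=
    ge_of_tendsto' hinner (fun k => le_of_lt (hφ (ξ k)))
  linarith [hv w hw]
lemma sq_tendsto_zero (f : ℕ → ℝ) (hf : ∀ n, 0 ≤ f n)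
    (h : Tendsto (fun n => f n ^ 2) atTop (nhds 0)) : Tendsto f atTop (nhds 0) := by
  have h2 := (Real.continuous_sqrt.tendsto 0).comp h
  rw [Real.sqrt_zero] at h2
  have h3 : (fun n => Real.sqrt (f n ^ 2)) = f := funext fun n => Real.sqrt_sq (hf n)
  rwa [Function.comp_def, h3] at h2

lemma tendsto_zero_of_le (a : ℕ → ℝ) (h0 : ∀ n, 0 ≤ a n)
    (h : ∀ ε > 0, ∀ᶠ n in atTop, a n ≤ ε) : Tendsto a atTop (nhds 0) := by
  rw [Metric.tendsto_atTop]
  intro ε hε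
  obtain ⟨N, hN⟩ := (h (ε/2) (by linarith)).exists_forall_of_atTop
  refine ⟨N, fun n hn => ?_⟩
  rw [Real.dist_eq, sub_zero, abs_of_nonneg (h0 n)]
  linarith [hN n hn]

set_option maxHeartbeats 16000000 in
/-- Convergence of the inertial viscosity-type iteration: with `T` nonexpansive (nonempty
fixed-point set), `S` an `η`-contraction (`η ∈ [0,1)`), `β ∈ (0,1)`, and `z` a fixed point
of `T` satisfying `⟪S z - z, w - z⟫ ≤ 0` for all fixed points `w` of `T`; if
`{α n} ⊂ (0,1)` with `α n → 0` and `∑ α n = ∞`, `{θ n} ⊂ [0,1)` with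
`(θ n / α n) ‖x n - x (n-1)‖ → 0`, and
`y n = x n + θ n (x n - x (n-1))`,
`x (n+1) = α n S (y n) + (1 - α n)(1 - β) y n + β (1 - α n) T (y n)` for `n ≥ 1`,
then `x n → z`. -/
theorem inertial_iteration_converges {d : ℕ}
    (T S : EuclideanSpace ℝ (Fin d) → EuclideanSpace ℝ (Fin d))
    (η β : ℝ) (hη : η ∈ Set.Ico (0 : ℝ) 1) (hβ : β ∈ Set.Ioo (0 : ℝ) 1)
    (hT : ∀ a b, ‖T a - T b‖ ≤ ‖a - b‖)
    (hS : ∀ a b, ‖S a - S b‖ ≤ η * ‖a - b‖)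
    (z : EuclideanSpace ℝ (Fin d)) (hz : T z = z)
    (hvar : ∀ w, T w = w → ⟪S z - z, w - z⟫ ≤ 0)
    (α θ : ℕ → ℝ) (x y : ℕ → EuclideanSpace ℝ (Fin d))
    (hα : ∀ n, α n ∈ Set.Ioo (0 : ℝ) 1)
    (hα0 : Tendsto α atTop (nhds 0))
    (hαsum : Tendsto (fun N => ∑ i ∈ Finset.range N, α i) atTop atTop)
    (hθ : ∀ n, θ n ∈ Set.Ico (0 : ℝ) 1)
    (hθα : Tendsto (fun n => θ n / α n * ‖x n - x (n - 1)‖) atTop (nhds 0))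
    (hy : ∀ n ≥ 1, y n = x n + θ n • (x n - x (n - 1)))
    (hrec : ∀ n ≥ 1, x (n + 1) =
      α n • S (y n) + ((1 - α n) * (1 - β)) • y n + (β * (1 - α n)) • T (y n)) :
    Tendsto x atTop (nhds z) := by
  obtain ⟨hη0, hη1⟩ := hη
  obtain ⟨hβ0, hβ1⟩ := hβ
  have h1η : (0:ℝ) < 1 - η := by linarith
  set v := S z - z with hvdef
  clear_value v
  set U : EuclideanSpace ℝ (Fin d) → EuclideanSpace ℝ (Fin d) :=
    fun w => (1-β) • w + β • T w with hUdef
  clear_value U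
  have hUz : U z = z := by
    simp only [hUdef, hz]
    rw [← add_smul]
    simp
  have hUnon : ∀ a b, ‖U a - U b‖ ≤ ‖a - b‖ := by
    intro a b
    have h1 : U a - U b = (1-β) • (a - b) + β • (T a - T b) := by
      simp only [hUdef]; module
    rw [h1]
    calc ‖(1-β) • (a - b) + β • (T a - T b)‖
        ≤ ‖(1-β) • (a - b)‖ + ‖β • (T a - T b)‖ := norm_add_le _ _
      _ = (1-β) * ‖a - b‖ + β * ‖T a - T b‖ := by
          rw [norm_smul, norm_smul, Real.norm_eq_abs, Real.norm_eq_abs,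
            abs_of_pos (by linarith), abs_of_pos hβ0]
      _ ≤ (1-β) * ‖a - b‖ + β * ‖a - b‖ := by nlinarith [hT a b]
      _ = ‖a - b‖ := by ring
  have hrec' : ∀ n ≥ 1, x (n+1) = α n • S (y n) + (1 - α n) • U (y n) := by
    intro n hn
    rw [hrec n hn]
    simp only [hUdef]
    module
  set c : ℕ → ℝ := fun n => θ n / α n * ‖x n - x (n - 1)‖ with hcdef
  clear_value c
  have hc0 : ∀ n, 0 ≤ c n := by
    intro n
    simp only [hcdef]
    have := (hα n).1
    have := (hθ n).1
    positivity
  obtain ⟨C, hCmem⟩ := hθα.bddAbove_range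
  have hcC : ∀ n, c n ≤ C := fun n => hCmem (Set.mem_range_self n)
  have hC0 : 0 ≤ C := le_trans (hc0 0) (hcC 0)
  have hαc : ∀ n, θ n * ‖x n - x (n-1)‖ = α n * c n := by
    intro n
    have hne : α n ≠ 0 := (hα n).1.ne'
    simp only [hcdef]
    field_simp
  have hyc : ∀ n ≥ 1, ‖y n - z‖ ≤ ‖x n - z‖ + α n * c n := by
    intro n hn
    have h1 : y n - z = (x n - z) + θ n • (x n - x (n-1)) := by
      rw [hy n hn]; module
    rw [h1, ← hαc n]
    calc ‖(x n - z) + θ n • (x n - x (n-1))‖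
        ≤ ‖x n - z‖ + ‖θ n • (x n - x (n-1))‖ := norm_add_le _ _
      _ = ‖x n - z‖ + θ n * ‖x n - x (n-1)‖ := by
          rw [norm_smul, Real.norm_eq_abs, abs_of_nonneg (hθ n).1]
  set γ : ℕ → ℝ := fun n => α n * (1 - η) with hγdef
  clear_value γ
  have hγpos : ∀ n, 0 < γ n := by
    intro n
    simp only [hγdef]
    exact mul_pos (hα n).1 h1η
  have hγ1 : ∀ n, γ n ≤ 1 := by
    intro n
    have h1 := (hα n).1; have h2 := (hα n).2
    simp only [hγdef]
    nlinarith
  have hstep : ∀ n ≥ 1, ‖x (n+1) - z‖ ≤ (1 - γ n) * ‖y n - z‖ + α n * ‖v‖ := by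
    intro n hn
    have hxz : x (n+1) - z = α n • (S (y n) - S z) + α n • v + (1 - α n) • (U (y n) - U z) := by
      rw [hrec' n hn, hUz, hvdef]
      module
    have h1 := (hα n).1; have h2 := (hα n).2
    rw [hxz]
    calc ‖α n • (S (y n) - S z) + α n • v + (1 - α n) • (U (y n) - U z)‖
        ≤ ‖α n • (S (y n) - S z) + α n • v‖ + ‖(1 - α n) • (U (y n) - U z)‖ := norm_add_le _ _
      _ ≤ ‖α n • (S (y n) - S z)‖ + ‖α n • v‖ + ‖(1 - α n) • (U (y n) - U z)‖ := by
          linarith [norm_add_le (α n • (S (y n) - S z)) (α n • v)]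
      _ = α n * ‖S (y n) - S z‖ + α n * ‖v‖ + (1 - α n) * ‖U (y n) - U z‖ := by
          rw [norm_smul, norm_smul, norm_smul, Real.norm_eq_abs, Real.norm_eq_abs,
            abs_of_pos h1, abs_of_pos (by linarith : (0:ℝ) < 1 - α n)]
      _ ≤ α n * (η * ‖y n - z‖) + α n * ‖v‖ + (1 - α n) * ‖y n - z‖ := by
          have := hS (y n) z
          have := hUnon (y n) z
          nlinarith
      _ = (1 - γ n) * ‖y n - z‖ + α n * ‖v‖ := by simp only [hγdef]; ring
  set D : ℝ := (C + ‖v‖) / (1 - η) with hDdef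
  clear_value D
  set M : ℝ := max ‖x 1 - z‖ D with hMdef
  clear_value M
  have hDM : D ≤ M := by rw [hMdef]; exact le_max_right _ _
  have hM : ∀ n ≥ 1, ‖x n - z‖ ≤ M := by
    intro n hn
    induction n, hn using Nat.le_induction with
    | base => rw [hMdef]; exact le_max_left _ _
    | succ n hn ih =>
      have h1 := (hα n).1; have h2 := (hα n).2
      have h3 := hstep n hn
      have h4 := hyc n hn
      have h5 := hγpos n; have h6 := hγ1 n
      have h7 : α n * c n ≤ c n := by nlinarith [hc0 n]
      have h8 : γ n * D = α n * (C + ‖v‖) := by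
        simp only [hγdef, hDdef]
        rw [mul_assoc, mul_div_cancel₀ _ h1η.ne']
      have h9 : γ n * D ≤ γ n * M := mul_le_mul_of_nonneg_left hDM (le_of_lt h5)
      have h10 : ‖y n - z‖ ≤ M + α n * c n := by linarith
      have h11 : (1 - γ n) * ‖y n - z‖ ≤ (1 - γ n) * (M + α n * c n) :=
        mul_le_mul_of_nonneg_left h10 (by linarith)
      have h12 : α n * c n ≤ α n * C := mul_le_mul_of_nonneg_left (hcC n) (le_of_lt h1)
      have h14 : 0 ≤ γ n * (α n * c n) := by
        have := hc0 n
        have h5' := le_of_lt h5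
        positivity
      have h15 : (1 - γ n) * (M + α n * c n) = M + α n * c n - γ n * M - γ n * (α n * c n) := by
        ring
      have h16 : α n * (C + ‖v‖) = α n * C + α n * ‖v‖ := by ring
      linarith
  have hM0 : 0 ≤ M := by rw [hMdef]; exact le_trans (norm_nonneg _) (le_max_left _ _)
  have hyM : ∀ n ≥ 1, ‖y n - z‖ ≤ M + C := by
    intro n hn
    have h1 := hyc n hn
    have h2 := hM n hn
    have h3 : α n * c n ≤ C := by nlinarith [(hα n).1, (hα n).2, hc0 n, hcC n]
    linarith
  -- quantities for the main recursion
  set a : ℕ → ℝ := fun n => ‖x n - z‖^2 with hadef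
  clear_value a
  have ha0 : ∀ n, 0 ≤ a n := fun n => by simp only [hadef]; positivity
  set τ : ℕ → ℝ := fun n => (c n * (2*M+C) + 2 * ⟪v, x (n+1) - z⟫) / (1-η) with hτdef
  clear_value τ
  -- square bound for y
  have hysq : ∀ n ≥ 1, ‖y n - z‖^2 ≤ a n + α n * c n * (2*M+C) := by
    intro n hn
    have h1 := hyc n hn
    have h2 := hM n hn
    have h3 := (hα n).1; have h4 := (hα n).2
    have h5 := hc0 n; have h6 := hcC n
    have h7 : 0 ≤ α n * c n := by positivity
    simp only [hadef]
    have h8 : ‖y n - z‖^2 ≤ (‖x n - z‖ + α n * c n)^2 :=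
      pow_le_pow_left₀ (norm_nonneg _) h1 2
    have h9 : α n * c n ≤ C := by nlinarith
    have h10 : ‖x n - z‖ * (α n * c n) ≤ M * (α n * c n) :=
      mul_le_mul_of_nonneg_right h2 h7
    have h11 : (α n * c n)^2 ≤ C * (α n * c n) := by nlinarith
    nlinarith [norm_nonneg (x n - z)]
  -- main quadratic recursion
  have haτ : ∀ n ≥ 1, a (n+1) ≤ (1 - γ n) * a n + γ n * τ n := by
    intro n hn
    have h1 := (hα n).1; have h2 := (hα n).2
    set w : EuclideanSpace ℝ (Fin d) :=
      α n • (S (y n) - S z) + (1 - α n) • (U (y n) - U z) with hwdef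
    clear_value w
    have hx : x (n+1) - z = w + α n • v := by
      rw [hwdef, hrec' n hn, hUz, hvdef]
      module
    have e1 : ‖x (n+1) - z‖^2 = ‖w‖^2 + 2*⟪w, α n • v⟫ + ‖α n • v‖^2 := by
      rw [hx, norm_add_sq_real]
    have e2 : ⟪x (n+1) - z, α n • v⟫ = ⟪w, α n • v⟫ + ‖α n • v‖^2 := by
      rw [hx, inner_add_left, real_inner_self_eq_norm_sq]
    have e3 : ⟪x (n+1) - z, α n • v⟫ = α n * ⟪v, x (n+1) - z⟫ := by
      rw [real_inner_smul_right, real_inner_comm]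
    have hnormw : ‖w‖ ≤ (1 - γ n) * ‖y n - z‖ := by
      rw [hwdef]
      calc ‖α n • (S (y n) - S z) + (1 - α n) • (U (y n) - U z)‖
          ≤ ‖α n • (S (y n) - S z)‖ + ‖(1 - α n) • (U (y n) - U z)‖ := norm_add_le _ _
        _ = α n * ‖S (y n) - S z‖ + (1 - α n) * ‖U (y n) - U z‖ := by
            rw [norm_smul, norm_smul, Real.norm_eq_abs, Real.norm_eq_abs,
              abs_of_pos h1, abs_of_pos (by linarith : (0:ℝ) < 1 - α n)]
        _ ≤ α n * (η * ‖y n - z‖) + (1 - α n) * ‖y n - z‖ := by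
            have := hS (y n) z
            have := hUnon (y n) z
            nlinarith
        _ = (1 - γ n) * ‖y n - z‖ := by simp only [hγdef]; ring
    have hw2 : ‖w‖^2 ≤ (1 - γ n) * ‖y n - z‖^2 := by
      have hγn := hγpos n; have hγn1 := hγ1 n
      have hh1 : ‖w‖^2 ≤ ((1 - γ n) * ‖y n - z‖)^2 :=
        pow_le_pow_left₀ (norm_nonneg _) hnormw 2
      have hh2 : ((1 - γ n) * ‖y n - z‖)^2 = (1 - γ n)^2 * ‖y n - z‖^2 := by ring
      have hh3 : (1 - γ n)^2 ≤ 1 - γ n := by nlinarith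
      have hh4 : (1 - γ n)^2 * ‖y n - z‖^2 ≤ (1 - γ n) * ‖y n - z‖^2 :=
        mul_le_mul_of_nonneg_right hh3 (sq_nonneg _)
      linarith
    have hys := hysq n hn
    have hγτ : γ n * τ n = α n * (c n * (2*M+C) + 2 * ⟪v, x (n+1) - z⟫) := by
      simp only [hγdef, hτdef]
      rw [mul_assoc, mul_div_cancel₀ _ h1η.ne']
    have hγn := hγpos n; have hγn1 := hγ1 n
    have h5 := hc0 n
    have h8 : 0 ≤ α n * (c n * (2*M+C)) := by positivity
    have h9 : (1 - γ n) * (a n + α n * c n * (2*M+C))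
        = (1 - γ n) * a n + (1 - γ n) * (α n * c n * (2*M+C)) := by ring
    have h10 : (1 - γ n) * ‖y n - z‖^2 ≤ (1 - γ n) * (a n + α n * c n * (2*M+C)) :=
      mul_le_mul_of_nonneg_left hys (by linarith)
    have h11 : (1 - γ n) * (α n * c n * (2*M+C)) ≤ α n * (c n * (2*M+C)) := by
      nlinarith [h8]
    have e4 : ‖x (n+1) - z‖^2 = ‖w‖^2 + 2*⟪x (n+1) - z, α n • v⟫ - ‖α n • v‖^2 := by
      rw [e1, e2]; ring
    have e5 : ‖x (n+1) - z‖^2 ≤ ‖w‖^2 + 2 * (α n * ⟪v, x (n+1) - z⟫) := by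
      rw [e4, e3]
      linarith [sq_nonneg ‖α n • v‖]
    simp only [hadef] at hys h10 ⊢
    rw [hγτ]
    linarith [hw2, h10, e5, h11, h9]
  -- the descent inequality (asymptotic regularity)
  set K2 : ℝ := (η*(M+C) + ‖v‖)^2 + C*(2*M+C) with hK2def
  clear_value K2
  have hK20 : 0 ≤ K2 := by
    have hh1 : 0 ≤ C*(2*M+C) := mul_nonneg hC0 (by linarith)
    have hh2 : 0 ≤ (η*(M+C) + ‖v‖)^2 := sq_nonneg _
    simp only [hK2def]
    linarith
  have hE : ∀ n ≥ 1, β*(1-β)*(1 - α n)*‖y n - T (y n)‖^2 ≤ a n - a (n+1) + α n * K2 := by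
    intro n hn
    have h1 := (hα n).1; have h2 := (hα n).2
    have hxx : x (n+1) - z = (1-(1 - α n)) • (S (y n) - z) + (1 - α n) • (U (y n) - z) := by
      rw [hrec' n hn]
      module
    have hcombo1 := combo_sq (1 - α n) (S (y n) - z) (U (y n) - z)
    rw [← hxx] at hcombo1
    have hUyz : U (y n) - z = (1-β) • (y n - z) + β • (T (y n) - z) := by
      simp only [hUdef]; module
    have hcombo2 := combo_sq β (y n - z) (T (y n) - z)
    rw [← hUyz] at hcombo2
    have hyTy : (y n - z) - (T (y n) - z) = y n - T (y n) := by abel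
    rw [hyTy] at hcombo2
    have hTyz : ‖T (y n) - z‖ ≤ ‖y n - z‖ := by
      have := hT (y n) z
      rwa [hz] at this
    have hSyz : ‖S (y n) - z‖ ≤ η*(M+C) + ‖v‖ := by
      calc ‖S (y n) - z‖ = ‖(S (y n) - S z) + v‖ := by rw [hvdef]; congr 1; abel
        _ ≤ ‖S (y n) - S z‖ + ‖v‖ := norm_add_le _ _
        _ ≤ η * ‖y n - z‖ + ‖v‖ := by linarith [hS (y n) z]
        _ ≤ η*(M+C) + ‖v‖ := by
            linarith [mul_le_mul_of_nonneg_left (hyM n hn) hη0]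
    have hys := hysq n hn
    have h3 : α n * c n * (2*M+C) ≤ α n * (C*(2*M+C)) := by
      have hh := mul_le_mul_of_nonneg_right
        (mul_le_mul_of_nonneg_left (hcC n) h1.le) (by linarith : (0:ℝ) ≤ 2*M+C)
      calc α n * c n * (2*M+C) ≤ α n * C * (2*M+C) := hh
        _ = α n * (C*(2*M+C)) := by ring
    have h4 : ‖S (y n) - z‖^2 ≤ (η*(M+C) + ‖v‖)^2 :=
      pow_le_pow_left₀ (norm_nonneg _) hSyz 2
    have hTyz2 : ‖T (y n) - z‖^2 ≤ ‖y n - z‖^2 :=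
      pow_le_pow_left₀ (norm_nonneg _) hTyz 2
    have gC : ‖x (n+1) - z‖^2 = α n * ‖S (y n) - z‖^2 + (1 - α n) * ‖U (y n) - z‖^2
        - α n * (1 - α n) * ‖S (y n) - z - (U (y n) - z)‖^2 := by
      rw [hcombo1]; ring
    have gU : (1 - α n) * ‖U (y n) - z‖^2 = (1 - α n) * ((1-β) * ‖y n - z‖^2
        + β * ‖T (y n) - z‖^2 - β*(1-β) * ‖y n - T (y n)‖^2) := by
      rw [hcombo2]
    have g1 : (1 - α n) * β * ‖T (y n) - z‖^2 ≤ (1 - α n) * β * ‖y n - z‖^2 :=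
      mul_le_mul_of_nonneg_left hTyz2 (mul_nonneg (by linarith) hβ0.le)
    have g3 : (1 - α n) * ‖y n - z‖^2 ≤ ‖y n - z‖^2 := by
      have : 0 ≤ α n * ‖y n - z‖^2 := mul_nonneg h1.le (sq_nonneg _)
      linarith
    have g4 : ‖y n - z‖^2 ≤ ‖x n - z‖^2 + α n * (C*(2*M+C)) := by
      simp only [hadef] at hys
      linarith
    have g5 : α n * ‖S (y n) - z‖^2 ≤ α n * (η*(M+C) + ‖v‖)^2 :=
      mul_le_mul_of_nonneg_left h4 h1.le
    have g6 : 0 ≤ α n * (1 - α n) * ‖S (y n) - z - (U (y n) - z)‖^2 :=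
      mul_nonneg (mul_nonneg h1.le (by linarith)) (sq_nonneg _)
    have g7 : α n * (C*(2*M+C)) + α n * (η*(M+C) + ‖v‖)^2 = α n * K2 := by
      simp only [hK2def]; ring
    simp only [hadef] at gC ⊢
    linarith [gC, gU, g1, g3, g4, g5, g6, g7]
    -- gap between x (n+1) and y n
  set Bc : ℝ := (1+η)*(M+C) + ‖v‖ with hBcdef
  clear_value Bc
  have hxy1 : ∀ n ≥ 1, ‖x (n+1) - y n‖ ≤ α n * Bc + β * ‖y n - T (y n)‖ := by
    intro n hn
    have h1 := (hα n).1; have h2 := (hα n).2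
    have hid : x (n+1) - y n = α n • (S (y n) - y n) + (β*(1 - α n)) • (T (y n) - y n) := by
      rw [hrec n hn]; module
    have hSy : ‖S (y n) - y n‖ ≤ Bc := by
      simp only [hBcdef]
      calc ‖S (y n) - y n‖ = ‖(S (y n) - S z) + v + (z - y n)‖ := by
            rw [hvdef]; congr 1; abel
        _ ≤ ‖(S (y n) - S z) + v‖ + ‖z - y n‖ := norm_add_le _ _
        _ ≤ ‖S (y n) - S z‖ + ‖v‖ + ‖z - y n‖ := by
            linarith [norm_add_le (S (y n) - S z) v]
        _ ≤ η * ‖y n - z‖ + ‖v‖ + ‖y n - z‖ := by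
            rw [norm_sub_rev z (y n)]
            linarith [hS (y n) z]
        _ ≤ (1+η)*(M+C) + ‖v‖ := by
            have hm := hyM n hn
            have := mul_le_mul_of_nonneg_left hm hη0
            linarith
    rw [hid]
    calc ‖α n • (S (y n) - y n) + (β*(1 - α n)) • (T (y n) - y n)‖
        ≤ ‖α n • (S (y n) - y n)‖ + ‖(β*(1 - α n)) • (T (y n) - y n)‖ := norm_add_le _ _
      _ = α n * ‖S (y n) - y n‖ + (β*(1 - α n)) * ‖T (y n) - y n‖ := by
          rw [norm_smul, norm_smul, Real.norm_eq_abs, Real.norm_eq_abs, abs_of_pos h1,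
            abs_of_pos (mul_pos hβ0 (by linarith : (0:ℝ) < 1 - α n))]
      _ ≤ α n * Bc + β * ‖y n - T (y n)‖ := by
          have e1 : ‖T (y n) - y n‖ = ‖y n - T (y n)‖ := norm_sub_rev _ _
          have e2 := mul_le_mul_of_nonneg_left hSy h1.le
          have e4 : β*(1 - α n) ≤ β := by
            calc β*(1 - α n) ≤ β*1 := mul_le_mul_of_nonneg_left (by linarith) hβ0.le
              _ = β := mul_one β
          have e3 : (β*(1 - α n)) * ‖T (y n) - y n‖ ≤ β * ‖y n - T (y n)‖ := by
            rw [e1]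
            exact mul_le_mul_of_nonneg_right e4 (norm_nonneg _)
          linarith
  have hTcont : Continuous T := by
    have hlip : LipschitzWith 1 T := by
      apply LipschitzWith.of_dist_le_mul
      intro a b
      rw [dist_eq_norm, dist_eq_norm]
      simpa using hT a b
    exact hlip.continuous
  set R : ℝ := max (M+C) ‖y 0 - z‖ with hRdef
  clear_value R
  have hgR : ∀ m, ‖y m - z‖ ≤ R := by
    intro m
    rw [hRdef]
    rcases Nat.eq_zero_or_pos m with hm | hm
    · rw [hm]; exact le_max_right _ _
    · exact le_trans (hyM m hm) (le_max_left _ _)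
  have hγsum : Tendsto (fun N => ∑ i ∈ Finset.range N, γ i) atTop atTop := by
    have h2 : (fun N => ∑ i ∈ Finset.range N, γ i)
        = fun N => (∑ i ∈ Finset.range N, α i) * (1-η) := by
      funext N
      simp only [hγdef]
      rw [Finset.sum_mul]
    rw [h2]
    exact hαsum.atTop_mul_const h1η
  -- the limsup-type estimate along arbitrary index sequences
  have key : ∀ u : ℕ → ℕ, Tendsto u atTop atTop →
      Tendsto (fun n => ‖y (u n) - T (y (u n))‖) atTop (nhds 0) →
      ∀ ε > 0, ∀ᶠ n in atTop, τ (u n) ≤ ε := by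
    intro u hu hfixu ε hε
    have hε' : 0 < (1-η)*ε := mul_pos h1η hε
    have h1 : ∀ᶠ n in atTop, ⟪v, y (u n) - z⟫ ≤ (1-η)*ε/8 :=
      cluster_aux T hTcont v z hvar (fun n => y (u n)) R (fun n => hgR (u n))
        hfixu (by linarith)
    have h2 : ∀ᶠ n in atTop, c (u n) * (2*M+C) < (1-η)*ε/4 := by
      have ht := (hθα.comp hu).mul_const (2*M+C)
      rw [zero_mul] at ht
      exact ht.eventually_lt_const (by linarith)
    have h3 : ∀ᶠ n in atTop, ‖v‖ * (α (u n) * Bc) < (1-η)*ε/16 := by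
      have ht := ((hα0.comp hu).mul_const Bc).const_mul ‖v‖
      rw [zero_mul, mul_zero] at ht
      exact ht.eventually_lt_const (by linarith)
    have h4 : ∀ᶠ n in atTop, ‖v‖ * (β * ‖y (u n) - T (y (u n))‖) < (1-η)*ε/16 := by
      have ht := (hfixu.const_mul β).const_mul ‖v‖
      rw [mul_zero, mul_zero] at ht
      exact ht.eventually_lt_const (by linarith)
    have h5 : ∀ᶠ n in atTop, 1 ≤ u n := hu.eventually_ge_atTop 1
    filter_upwards [h1, h2, h3, h4, h5] with n g1 g2 g3 g4 g5
    have hxyb := hxy1 (u n) g5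
    have hsplit : ⟪v, x (u n + 1) - z⟫ = ⟪v, y (u n) - z⟫ + ⟪v, x (u n + 1) - y (u n)⟫ := by
      rw [← inner_add_right]
      congr 1
      abel
    have hCS := real_inner_le_norm v (x (u n + 1) - y (u n))
    have hvn : (0:ℝ) ≤ ‖v‖ := norm_nonneg v
    have h6 : ‖v‖ * ‖x (u n + 1) - y (u n)‖
        ≤ ‖v‖ * (α (u n) * Bc) + ‖v‖ * (β * ‖y (u n) - T (y (u n))‖) := by
      have hh := mul_le_mul_of_nonneg_left hxyb hvn
      have he : ‖v‖ * (α (u n) * Bc + β * ‖y (u n) - T (y (u n))‖)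
          = ‖v‖ * (α (u n) * Bc) + ‖v‖ * (β * ‖y (u n) - T (y (u n))‖) := by ring
      rw [he] at hh
      linarith
    have h7 : ⟪v, x (u n + 1) - z⟫ ≤ (1-η)*ε/8 + (1-η)*ε/16 + (1-η)*ε/16 := by
      rw [hsplit]
      linarith
    simp only [hτdef]
    rw [div_le_iff₀ h1η]
    linarith
  -- conclusion from a → 0
  have hconc : Tendsto a atTop (nhds 0) → Tendsto x atTop (nhds z) := by
    intro h
    rw [tendsto_iff_norm_sub_tendsto_zero]
    apply sq_tendsto_zero _ (fun n => norm_nonneg _)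
    rw [hadef] at h
    exact h
  -- asymptotic regularity along index sequences
  have hD2 : (0:ℝ) < β*(1-β) := mul_pos hβ0 (by linarith)
  have hreg : ∀ (u : ℕ → ℕ) (b : ℕ → ℝ), Tendsto u atTop atTop →
      Tendsto b atTop (nhds 0) →
      (∀ᶠ n in atTop, a (u n) - a (u n + 1) + α (u n) * K2 ≤ b n) →
      Tendsto (fun n => ‖y (u n) - T (y (u n))‖) atTop (nhds 0) := by
    intro u b hu hb hub
    apply sq_tendsto_zero _ (fun n => norm_nonneg _)
    have hα2 : ∀ᶠ n in atTop, α (u n) < 1/2 :=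
      (hα0.comp hu).eventually_lt_const (by norm_num)
    have hu1 : ∀ᶠ n in atTop, 1 ≤ u n := hu.eventually_ge_atTop 1
    have hb' : Tendsto (fun n => b n * (2/(β*(1-β)))) atTop (nhds 0) := by
      have := hb.mul_const (2/(β*(1-β)))
      rwa [zero_mul] at this
    apply squeeze_zero' (Eventually.of_forall fun n => sq_nonneg _) ?_ hb'
    filter_upwards [hα2, hu1, hub] with n g2 g1 g3
    have hEn := hE (u n) g1
    have hq := sq_nonneg ‖y (u n) - T (y (u n))‖
    have hmono : b n * (2/(β*(1-β))) = 2 * b n/(β*(1-β)) := by ring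
    rw [hmono, le_div_iff₀ hD2]
    have hnn : 0 ≤ (β*(1-β)) * ‖y (u n) - T (y (u n))‖^2 * (1 - 2*α (u n)) :=
      mul_nonneg (mul_nonneg hD2.le hq) (by linarith)
    linarith [hEn, g3, hnn]
  -- the two cases
  by_cases hcase : ∀ N, ∃ n ≥ N, a n < a (n+1)
  · -- Maingé case
    obtain ⟨ψ, hψtend, hψev, hψ1tend⟩ := mainge_psi a hcase
    have hαψK : Tendsto (fun n => α (ψ n) * K2) atTop (nhds 0) := by
      have := (hα0.comp hψtend).mul_const K2
      rwa [zero_mul] at this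
    have hfixψ : Tendsto (fun n => ‖y (ψ n) - T (y (ψ n))‖) atTop (nhds 0) := by
      apply hreg ψ (fun n => α (ψ n) * K2) hψtend hαψK
      filter_upwards [hψev] with n hn
      linarith only [hn.1]
    have hτψ := key ψ hψtend hfixψ
    have hψ1 : ∀ᶠ n in atTop, 1 ≤ ψ n := hψtend.eventually_ge_atTop 1
    apply hconc
    apply tendsto_zero_of_le a ha0
    intro ε hε
    filter_upwards [hτψ ε hε, hψev, hψ1] with n g1 g2 g3
    have hrecn := haτ (ψ n) g3
    have hγn := hγpos (ψ n)
    have hγ1n := hγ1 (ψ n)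
    have h7 : a (ψ n + 1) ≤ τ (ψ n) := by
      have hg1 : (0:ℝ) ≤ 1 - γ (ψ n) := by linarith only [hγ1n]
      have hh : (1 - γ (ψ n)) * a (ψ n) ≤ (1 - γ (ψ n)) * a (ψ n + 1) :=
        mul_le_mul_of_nonneg_left g2.1.le hg1
      have hh2 : γ (ψ n) * a (ψ n + 1) ≤ γ (ψ n) * τ (ψ n) := by linarith only [hrecn, hh]
      exact le_of_mul_le_mul_left hh2 hγn
    exact le_trans g2.2 (le_trans h7 g1)
  · -- eventually decreasing case
    push_neg at hcase
    obtain ⟨N, hN⟩ := hcase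
    have hanti : Antitone (fun k => a (k + N)) := by
      apply antitone_nat_of_succ_le
      intro k
      have h := hN (k + N) (Nat.le_add_left N k)
      have e : k + 1 + N = k + N + 1 := by omega
      rw [e]
      linarith
    have hbdd : BddBelow (Set.range fun k => a (k + N)) :=
      ⟨0, fun r ⟨k, hk⟩ => hk ▸ ha0 _⟩
    have hconv := tendsto_atTop_ciInf hanti hbdd
    have haL : Tendsto a atTop (nhds (⨅ i, a (i + N))) := (tendsto_add_atTop_iff_nat N).mp hconv
    have haL1 : Tendsto (fun n => a (n+1)) atTop (nhds (⨅ i, a (i + N))) :=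
      (tendsto_add_atTop_iff_nat 1).mpr haL
    have hdiff0 : Tendsto (fun n => a n - a (n+1) + α n * K2) atTop (nhds 0) := by
      have := (haL.sub haL1).add (hα0.mul_const K2)
      simpa using this
    have hfixid : Tendsto (fun n => ‖y n - T (y n)‖) atTop (nhds 0) := by
      have := hreg id (fun n => a n - a (n+1) + α n * K2) tendsto_id hdiff0
        (Eventually.of_forall fun n => le_refl _)
      simpa using this
    have hτev : ∀ ε > 0, ∀ᶠ n in atTop, τ n ≤ ε := by
      intro ε hε
      have := key id tendsto_id (by simpa using hfixid) ε hε
      simpa using this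
    exact hconc (xu_lemma a γ τ 1 ha0 hγpos hγ1 hγsum haτ hτev)
end

section
/- Let T : ℝⁿ → ℝⁿ be nonexpansive with a fixed point z, let S : ℝⁿ → ℝⁿ be an η-contraction with η ∈ [0,1), and let β ∈ (0,1). Let {α_n} ⊂ (0,1), let {θ_n} ⊂ [0,1), and suppose sup_{n≥1} (θ_n/α_n)·‖x_n − x_{n−1}‖ < ∞. Given x_0, x_1 ∈ ℝⁿ, define for n ≥ 1: y_n = x_n + θ_n(x_n − x_{n−1}) and x_{n+1} = α_n S(y_n) + (1 − α_n)(1 − β) y_n + β(1 − α_n) T(y_n). Then the sequence {x_n} (and hence {y_n}) is bounded. -/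
set_option maxHeartbeats 1600000 in
/-- Boundedness of the inertial Krasnoselskii–Mann-type iterates: with `T` nonexpansive
having a fixed point `z`, `S` an `η`-contraction (`η ∈ [0,1)`), `β ∈ (0,1)`,
`{α n} ⊂ (0,1)`, `{θ n} ⊂ [0,1)` and `sup_n (θ n / α n) ‖x n - x (n-1)‖ < ∞`, the
sequences `{x n}` and `{y n}` generated by
`y n = x n + θ n (x n - x (n-1))`,
`x (n+1) = α n S (y n) + (1 - α n)(1 - β) y n + β (1 - α n) T (y n)` are bounded. -/
theorem inertial_iterates_bounded {d : ℕ}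
    (T S : EuclideanSpace ℝ (Fin d) → EuclideanSpace ℝ (Fin d))
    (η β : ℝ) (hη : η ∈ Set.Ico (0 : ℝ) 1) (hβ : β ∈ Set.Ioo (0 : ℝ) 1)
    (hT : ∀ a b, ‖T a - T b‖ ≤ ‖a - b‖)
    (hS : ∀ a b, ‖S a - S b‖ ≤ η * ‖a - b‖)
    (z : EuclideanSpace ℝ (Fin d)) (hz : T z = z)
    (α θ : ℕ → ℝ) (x y : ℕ → EuclideanSpace ℝ (Fin d))
    (hα : ∀ n, α n ∈ Set.Ioo (0 : ℝ) 1)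
    (hθ : ∀ n, θ n ∈ Set.Ico (0 : ℝ) 1)
    (hsup : ∃ C : ℝ, ∀ n ≥ 1, θ n / α n * ‖x n - x (n - 1)‖ ≤ C)
    (hy : ∀ n ≥ 1, y n = x n + θ n • (x n - x (n - 1)))
    (hrec : ∀ n ≥ 1, x (n + 1) =
      α n • S (y n) + ((1 - α n) * (1 - β)) • y n + (β * (1 - α n)) • T (y n)) :
    ∃ R : ℝ, (∀ n, ‖x n‖ ≤ R) ∧ ∀ n ≥ 1, ‖y n‖ ≤ R := by
  obtain ⟨C, hC⟩ := hsup
  have hC0 : 0 ≤ C :=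
    le_trans (mul_nonneg (div_nonneg (hθ 1).1 (hα 1).1.le) (norm_nonneg _)) (hC 1 le_rfl)
  have h1η : 0 < 1 - η := by linarith [hη.2]
  set s : ℝ := ‖S z - z‖ with hs
  have hs0 : 0 ≤ s := norm_nonneg _
  set M : ℝ := max ‖x 1 - z‖ ((C + s) / (1 - η)) with hM
  have hM0 : 0 ≤ M := le_trans (norm_nonneg _) (le_max_left _ _)
  have hMkey : C + s ≤ (1 - η) * M := by
    have := le_max_right ‖x 1 - z‖ ((C + s) / (1 - η))
    rw [div_le_iff₀ h1η] at this
    linarith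
  -- bound on yterms
  have hyb : ∀ n ≥ 1, ‖y n - z‖ ≤ ‖x n - z‖ + α n * C := by
    intro n hn
    rw [hy n hn]
    have heq : x n + θ n • (x n - x (n - 1)) - z = (x n - z) + θ n • (x n - x (n - 1)) := by
      abel
    rw [heq]
    refine le_trans (norm_add_le _ _) ?_
    have h1 : ‖θ n • (x n - x (n - 1))‖ = θ n * ‖x n - x (n - 1)‖ := by
      rw [norm_smul, Real.norm_eq_abs, abs_of_nonneg (hθ n).1]
    have h2 : θ n * ‖x n - x (n - 1)‖ ≤ α n * C := by
      have hane : α n ≠ 0 := ne_of_gt (hα n).1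
      have : θ n * ‖x n - x (n - 1)‖ = α n * (θ n / α n * ‖x n - x (n - 1)‖) := by
        field_simp
      rw [this]
      exact mul_le_mul_of_nonneg_left (hC n hn) (hα n).1.le
    linarith [h1 ▸ h2]
  -- induction step
  have step : ∀ n ≥ 1, ‖x n - z‖ ≤ M → ‖x (n + 1) - z‖ ≤ M := by
    intro n hn hxn
    have ha0 := (hα n).1
    have ha1 := (hα n).2
    have hb0 := hβ.1
    have hb1 := hβ.2
    have hY : ‖y n - z‖ ≤ M + α n * C := le_trans (hyb n hn) (by linarith)
    have hY0 : (0:ℝ) ≤ ‖y n - z‖ := norm_nonneg _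
    have combo : x (n + 1) - z =
        α n • (S (y n) - z) + ((1 - α n) * (1 - β)) • (y n - z)
          + (β * (1 - α n)) • (T (y n) - z) := by
      rw [hrec n hn]
      module
    have hSb : ‖S (y n) - z‖ ≤ η * ‖y n - z‖ + s := by
      calc ‖S (y n) - z‖ = ‖(S (y n) - S z) + (S z - z)‖ := by abel_nf
        _ ≤ ‖S (y n) - S z‖ + ‖S z - z‖ := norm_add_le _ _
        _ ≤ η * ‖y n - z‖ + s := by linarith [hS (y n) z]
    have hTb : ‖T (y n) - z‖ ≤ ‖y n - z‖ := by
      have := hT (y n) z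
      rwa [hz] at this
    have hnorm : ‖x (n + 1) - z‖ ≤
        α n * (η * ‖y n - z‖ + s) + (1 - α n) * (1 - β) * ‖y n - z‖
          + β * (1 - α n) * ‖y n - z‖ := by
      rw [combo]
      refine le_trans (norm_add₃_le) ?_
      have e1 : ‖α n • (S (y n) - z)‖ = α n * ‖S (y n) - z‖ := by
        rw [norm_smul, Real.norm_eq_abs, abs_of_nonneg ha0.le]
      have e2 : ‖((1 - α n) * (1 - β)) • (y n - z)‖ = (1 - α n) * (1 - β) * ‖y n - z‖ := by
        rw [norm_smul, Real.norm_eq_abs, abs_of_nonneg (by nlinarith : (0:ℝ) ≤ (1 - α n) * (1 - β))]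
      have e3 : ‖(β * (1 - α n)) • (T (y n) - z)‖ = β * (1 - α n) * ‖T (y n) - z‖ := by
        rw [norm_smul, Real.norm_eq_abs, abs_of_nonneg (by nlinarith : (0:ℝ) ≤ β * (1 - α n))]
      rw [e1, e2, e3]
      have t1 : α n * ‖S (y n) - z‖ ≤ α n * (η * ‖y n - z‖ + s) :=
        mul_le_mul_of_nonneg_left hSb ha0.le
      have t3 : β * (1 - α n) * ‖T (y n) - z‖ ≤ β * (1 - α n) * ‖y n - z‖ :=
        mul_le_mul_of_nonneg_left hTb (by nlinarith)
      linarith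
    have hc1 : (0:ℝ) ≤ 1 - α n * (1 - η) := by nlinarith [mul_nonneg ha0.le hη.1]
    have k1 : (1 - α n * (1 - η)) * ‖y n - z‖ ≤ (1 - α n * (1 - η)) * (M + α n * C) :=
      mul_le_mul_of_nonneg_left hY hc1
    have k2 : (1 - α n * (1 - η)) * (α n * C) ≤ α n * C := by
      nlinarith [mul_nonneg (mul_nonneg ha0.le h1η.le) (mul_nonneg ha0.le hC0)]
    have k3 : α n * (C + s) ≤ α n * ((1 - η) * M) := mul_le_mul_of_nonneg_left hMkey ha0.le
    have hEq : α n * (η * ‖y n - z‖ + s) + (1 - α n) * (1 - β) * ‖y n - z‖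
        + β * (1 - α n) * ‖y n - z‖ = (1 - α n * (1 - η)) * ‖y n - z‖ + α n * s := by ring
    have hEq2 : (1 - α n * (1 - η)) * (M + α n * C)
        = M - α n * (1 - η) * M + (1 - α n * (1 - η)) * (α n * C) := by ring
    have hEq3 : α n * ((1 - η) * M) = α n * (1 - η) * M := by ring
    have hEq4 : α n * (C + s) = α n * C + α n * s := by ring
    linarith
  have hxb : ∀ n, ‖x (n + 1) - z‖ ≤ M := by
    intro n
    induction n with
    | zero => exact le_max_left _ _
    | succ k ih => exact step (k + 1) (by omega) ih
  refine ⟨‖z‖ + max (max M (M + C)) ‖x 0 - z‖, ?_, ?_⟩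
  · intro n
    have hb : ‖x n - z‖ ≤ max (max M (M + C)) ‖x 0 - z‖ := by
      cases n with
      | zero => exact le_max_right _ _
      | succ k => exact le_trans (hxb k) (le_trans (le_max_left _ _) (le_max_left _ _))
    have h2 := norm_sub_norm_le (x n) z
    linarith
  · intro n hn
    have hy1 : ‖y n - z‖ ≤ M + C := by
      have h1 := hyb n hn
      have h2 : α n * C ≤ C := by nlinarith [(hα n).1, (hα n).2]
      cases n with
      | zero => omega
      | succ k => linarith [hxb k]
    have h2 := norm_sub_norm_le (y n) z
    have h3 : M + C ≤ max (max M (M + C)) ‖x 0 - z‖ :=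
      le_trans (le_max_right _ _) (le_max_left _ _)
    linarith
end

section
/- Let f : ℝⁿ → ℝ be convex and differentiable with L_f-Lipschitz continuous gradient (L_f > 0), let g : ℝⁿ → (−∞, +∞] be proper, lower semicontinuous and convex, and let λ ∈ (0, 2/L_f). Then the prox-grad mapping T_λ defined by T_λ(x) = prox_{λg}(x − λ∇f(x)) is (2 + λL_f)/4-averaged; that is, there exists a nonexpansive operator T : ℝⁿ → ℝⁿ such that T_λ = ((2 − λL_f)/4)·I + ((2 + λL_f)/4)·T, where I is the identity. -/
/-!
By the Baillon–Haddad theorem `∇f` is `1/L`-cocoercive, which says exactly that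
`S = I - (2/L)∇f` is nonexpansive, so the gradient step `I - λ∇f = (1 - θ) I + θ S` with
`θ = λL/2` is `θ`-averaged. The proximal map is firmly nonexpansive, so `N = 2 prox - I` is
nonexpansive and `prox = (I + N)/2`. Expanding, `prox ∘ (I - λ∇f) = (1 - θ)/2 · I + (1 + θ)/2 · T`
where `T = (θ S + N ∘ (I - λ∇f))/(1 + θ)` is a convex combination of nonexpansive maps, and
`(1 + θ)/2 = (2 + λL)/4`.
-/

open RealInnerProductSpace Set Filter Topology

section Normed

variable {E : Type*} [NormedAddCommGroup E] [NormedSpace ℝ E]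

def IsAveraged (β : ℝ) (T : E → E) : Prop :=
  ∃ S : E → E, (∀ x y, ‖S x - S y‖ ≤ ‖x - y‖) ∧ ∀ x, T x = (1 - β) • x + β • S x

lemma norm_convexCombination_sub_le {S R : E → E} (hS : ∀ x y, ‖S x - S y‖ ≤ ‖x - y‖)
    (hR : ∀ x y, ‖R x - R y‖ ≤ ‖x - y‖) {a b : ℝ} (ha : 0 ≤ a) (hb : 0 ≤ b) (hab : a + b = 1)
    (x y : E) : ‖(a • S x + b • R x) - (a • S y + b • R y)‖ ≤ ‖x - y‖ :=
  calc ‖(a • S x + b • R x) - (a • S y + b • R y)‖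
      = ‖a • (S x - S y) + b • (R x - R y)‖ := by congr 1; module
    _ ≤ a * ‖S x - S y‖ + b * ‖R x - R y‖ := by
      grw [norm_add_le, norm_smul_of_nonneg ha, norm_smul_of_nonneg hb]
    _ ≤ a * ‖x - y‖ + b * ‖x - y‖ := by gcongr <;> apply_assumption
    _ = ‖x - y‖ := by rw [← add_mul, hab, one_mul]

lemma IsAveraged.norm_sub_le {β : ℝ} {T : E → E} (hT : IsAveraged β T) (hβ₀ : 0 ≤ β)
    (hβ₁ : β ≤ 1) (x y : E) : ‖T x - T y‖ ≤ ‖x - y‖ := by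
  obtain ⟨S, hS, hTS⟩ := hT
  rw [hTS, hTS]
  exact norm_convexCombination_sub_le (fun _ _ ↦ le_rfl) hS (by linarith) hβ₀ (by ring) x y

lemma IsAveraged.comp_of_half {P G : E → E} {θ : ℝ} (hP : IsAveraged (1 / 2) P)
    (hG : IsAveraged θ G) (hθ₀ : 0 ≤ θ) (hθ₁ : θ ≤ 1) : IsAveraged ((1 + θ) / 2) (P ∘ G) := by
  obtain ⟨N, hN, hPN⟩ := hP
  have hG_le := hG.norm_sub_le hθ₀ hθ₁
  obtain ⟨S, hS, hGS⟩ := hG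
  have hθ : 0 < 1 + θ := by linarith
  refine ⟨fun z ↦ (θ / (1 + θ)) • S z + (1 / (1 + θ)) • N (G z), ?_, fun z ↦ ?_⟩
  · have hNG : ∀ x y, ‖N (G x) - N (G y)‖ ≤ ‖x - y‖ := fun x y ↦
      (hN _ _).trans (hG_le x y)
    exact norm_convexCombination_sub_le hS hNG (by positivity) (by positivity)
      (by field_simp; ring)
  · dsimp only
    rw [Function.comp_apply, hPN]
    generalize N (G z) = n
    rw [hGS]
    match_scalars <;> field_simp <;> ring

end Normed

section InnerProduct

variable {E : Type*} [NormedAddCommGroup E] [InnerProductSpace ℝ E]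

lemma norm_sub_smul_le_of_mul_norm_sq_le {u v : E} {c : ℝ} (hc : 0 ≤ c)
    (h : c * ‖v‖ ^ 2 ≤ 2 * ⟪u, v⟫) : ‖u - c • v‖ ≤ ‖u‖ := by
  refine (sq_le_sq₀ (norm_nonneg _) (norm_nonneg _)).1 ?_
  rw [norm_sub_sq_real, norm_smul, real_inner_smul_right, mul_pow, Real.norm_of_nonneg hc]
  nlinarith [mul_le_mul_of_nonneg_left h hc]

lemma isAveraged_half_of_firmlyNonexpansive {P : E → E}
    (hP : ∀ x y, ‖P x - P y‖ ^ 2 ≤ ⟪x - y, P x - P y⟫) : IsAveraged (1 / 2) P := by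
  refine ⟨fun x ↦ (2 : ℝ) • P x - x, fun x y ↦ ?_, fun x ↦ by module⟩
  calc ‖((2 : ℝ) • P x - x) - ((2 : ℝ) • P y - y)‖ = ‖(x - y) - (2 : ℝ) • (P x - P y)‖ := by
        rw [← norm_neg]; congr 1; module
    _ ≤ ‖x - y‖ := norm_sub_smul_le_of_mul_norm_sq_le zero_le_two (by linarith [hP x y])

lemma isAveraged_sub_smul_of_cocoercive {F : E → E} {L : ℝ} (hL : 0 < L)
    (hF : ∀ x y, 1 / L * ‖F x - F y‖ ^ 2 ≤ ⟪F x - F y, x - y⟫) (lam : ℝ) :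
    IsAveraged (lam * L / 2) (fun x ↦ x - lam • F x) := by
  refine ⟨fun x ↦ x - (2 / L) • F x, fun x y ↦ ?_, fun x ↦ ?_⟩
  · calc ‖(x - (2 / L) • F x) - (y - (2 / L) • F y)‖ = ‖(x - y) - (2 / L) • (F x - F y)‖ := by
          congr 1; module
      _ ≤ ‖x - y‖ := by
        refine norm_sub_smul_le_of_mul_norm_sq_le (by positivity) ?_
        rw [real_inner_comm, div_eq_mul_one_div 2 L, mul_assoc]
        linarith [hF x y]
  · match_scalars
    · ring
    · field_simp

end InnerProduct

section Gradient

variable {E : Type*} [NormedAddCommGroup E] [InnerProductSpace ℝ E] [CompleteSpace E]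
  {f : E → ℝ} {f' : E → E}

lemma hasDerivAt_comp_lineMap (hf : ∀ z, HasGradientAt f (f' z) z) (x y : E) (t : ℝ) :
    HasDerivAt (f ∘ AffineMap.lineMap x y) ⟪f' (AffineMap.lineMap x y t), y - x⟫ t := by
  simpa using (hasGradientAt_iff_hasFDerivAt.1 (hf _)).comp_hasDerivAt t
    AffineMap.hasDerivAt_lineMap

lemma ConvexOn.add_inner_le_of_hasGradientAt {s : Set E} (hconv : ConvexOn ℝ s f)
    (hf : ∀ z, HasGradientAt f (f' z) z) {x y : E} (hx : x ∈ s) (hy : y ∈ s) :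
    f x + ⟪f' x, y - x⟫ ≤ f y := by
  have hφ := (hconv.comp_affineMap (AffineMap.lineMap x y)).le_slope_of_hasDerivAt
    (x := 0) (y := 1) (by simpa using hx) (by simpa using hy) zero_lt_one
    (hasDerivAt_comp_lineMap hf x y 0)
  simp only [slope_def_field, Function.comp_apply, AffineMap.lineMap_apply_zero,
    AffineMap.lineMap_apply_one, sub_zero, div_one] at hφ
  linarith

lemma le_add_inner_add_sq_of_lipschitz_gradient {L : ℝ} (hf : ∀ z, HasGradientAt f (f' z) z)
    (hlip : ∀ x y, ‖f' x - f' y‖ ≤ L * ‖x - y‖) (x y : E) :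
    f y ≤ f x + ⟪f' x, y - x⟫ + L / 2 * ‖y - x‖ ^ 2 := by
  set ψ : ℝ → ℝ := fun t ↦
    f (AffineMap.lineMap x y t) - t * ⟪f' x, y - x⟫ - L / 2 * t ^ 2 * ‖y - x‖ ^ 2
  have hψ : ∀ t, HasDerivAt ψ
      (⟪f' (AffineMap.lineMap x y t), y - x⟫ - ⟪f' x, y - x⟫ - L * t * ‖y - x‖ ^ 2) t := by
    intro t
    refine (((hasDerivAt_comp_lineMap hf x y t).sub
      ((hasDerivAt_id t).mul_const ⟪f' x, y - x⟫)).sub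
      (((hasDerivAt_pow 2 t).const_mul (L / 2)).mul_const (‖y - x‖ ^ 2))).congr_deriv ?_
    simp only [Nat.cast_ofNat]
    ring
  have hanti : AntitoneOn ψ (Icc 0 1) := by
    refine antitoneOn_of_hasDerivWithinAt_nonpos (convex_Icc 0 1)
      (HasDerivAt.continuousOn fun t _ ↦ hψ t) (fun t _ ↦ (hψ t).hasDerivWithinAt) ?_
    rintro t ht
    rw [interior_Icc] at ht
    have hdist : ‖AffineMap.lineMap x y t - x‖ = t * ‖y - x‖ := by
      rw [AffineMap.lineMap_apply_module', add_sub_cancel_right, norm_smul,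
        Real.norm_of_nonneg ht.1.le]
    have hinner := real_inner_le_norm (f' (AffineMap.lineMap x y t) - f' x) (y - x)
    rw [inner_sub_left] at hinner
    have hgrad := mul_le_mul_of_nonneg_right (hlip (AffineMap.lineMap x y t) x)
      (norm_nonneg (y - x))
    rw [hdist] at hgrad
    linarith
  have hend : ψ 1 ≤ ψ 0 := hanti (by simp) (by simp) zero_le_one
  simp only [ψ, AffineMap.lineMap_apply_one, AffineMap.lineMap_apply_zero] at hend
  linarith

lemma ConvexOn.add_inner_add_sq_le_of_lipschitz_gradient {L : ℝ} (hL : 0 < L)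
    (hconv : ConvexOn ℝ univ f) (hf : ∀ z, HasGradientAt f (f' z) z)
    (hlip : ∀ x y, ‖f' x - f' y‖ ≤ L * ‖x - y‖) (x y : E) :
    f x + ⟪f' x, y - x⟫ + 1 / (2 * L) * ‖f' y - f' x‖ ^ 2 ≤ f y := by
  set v := f' y - f' x
  -- `z` is a gradient step from `y` for `f - ⟪f' x, ·⟫`, a convex function minimised at `x`.
  set z := y - (1 / L) • v
  have hzy : z - y = -(1 / L) • v := by simp only [z]; module
  have hlower := hconv.add_inner_le_of_hasGradientAt hf (mem_univ x) (mem_univ z)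
  have hupper := le_add_inner_add_sq_of_lipschitz_gradient hf hlip y z
  have hsplit : ⟪f' x, z - x⟫ = ⟪f' x, y - x⟫ + ⟪f' x, z - y⟫ := by
    rw [← inner_add_right, sub_add_sub_cancel']
  have hinner : ⟪f' x, z - y⟫ - ⟪f' y, z - y⟫ = 2 * (1 / (2 * L) * ‖v‖ ^ 2) := by
    rw [← inner_sub_left, hzy, real_inner_smul_right, ← neg_sub, inner_neg_left,
      real_inner_self_eq_norm_sq]
    field_simp
    ring
  have hnorm : L / 2 * ‖z - y‖ ^ 2 = 1 / (2 * L) * ‖v‖ ^ 2 := by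
    rw [hzy, norm_smul, mul_pow, Real.norm_eq_abs, sq_abs]
    field_simp
  linarith

theorem ConvexOn.cocoercive_of_lipschitz_gradient {L : ℝ} (hL : 0 < L)
    (hconv : ConvexOn ℝ univ f) (hf : ∀ z, HasGradientAt f (f' z) z)
    (hlip : ∀ x y, ‖f' x - f' y‖ ≤ L * ‖x - y‖) (x y : E) :
    1 / L * ‖f' x - f' y‖ ^ 2 ≤ ⟪f' x - f' y, x - y⟫ := by
  have hxy := hconv.add_inner_add_sq_le_of_lipschitz_gradient hL hf hlip x y
  have hyx := hconv.add_inner_add_sq_le_of_lipschitz_gradient hL hf hlip y x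
  rw [norm_sub_rev] at hxy
  have hsum : ⟪f' x - f' y, x - y⟫ = -⟪f' x, y - x⟫ - ⟪f' y, x - y⟫ := by
    rw [inner_sub_left, ← inner_neg_right, neg_sub]
  have hhalf : 1 / L = 1 / (2 * L) + 1 / (2 * L) := by field_simp; norm_num
  rw [hsum, hhalf]
  linarith

end Gradient

section Prox

variable {E : Type*} [NormedAddCommGroup E] {g : E → EReal} {lam : ℝ} {prox : E → E}

def IsProxMap (g : E → EReal) (lam : ℝ) (prox : E → E) : Prop :=
  ∀ x u, g (prox x) + ((‖prox x - x‖ ^ 2 / (2 * lam) : ℝ) : EReal) ≤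
    g u + ((‖u - x‖ ^ 2 / (2 * lam) : ℝ) : EReal)

lemma IsProxMap.exists_coe_eq (hprox : IsProxMap g lam prox) (hg_nebot : ∀ x, g x ≠ ⊥)
    (hg_proper : ∃ x, g x ≠ ⊤) (x : E) : ∃ a : ℝ, g (prox x) = a := by
  obtain ⟨u, hu⟩ := hg_proper
  have hne_top : g (prox x) ≠ ⊤ := by
    intro htop
    have hmin := hprox x u
    rw [htop, EReal.top_add_coe, top_le_iff] at hmin
    exact EReal.add_ne_top hu (EReal.coe_ne_top _) hmin
  exact ⟨_, (EReal.coe_toReal hne_top (hg_nebot _)).symm⟩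

variable [InnerProductSpace ℝ E]

lemma IsProxMap.inner_sub_le (hprox : IsProxMap g lam prox) (hlam : 0 < lam)
    (hg_conv : ∀ x y : E, ∀ a b : ℝ, 0 ≤ a → 0 ≤ b → a + b = 1 →
      g (a • x + b • y) ≤ (a : EReal) * g x + (b : EReal) * g y)
    {x u : E} {a b : ℝ} (ha : g (prox x) = a) (hb : g u = b) :
    ⟪x - prox x, u - prox x⟫ ≤ lam * (b - a) := by
  set p := prox x
  have hsegment : ∀ t ∈ Ioc (0 : ℝ) 1,
      lam * (a - b) ≤ ⟪p - x, u - p⟫ + t / 2 * ‖u - p‖ ^ 2 := by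
    rintro t ⟨ht₀, ht₁⟩
    have hconv := hg_conv p u (1 - t) t (by linarith) ht₀.le (by ring)
    have hmin := hprox x ((1 - t) • p + t • u)
    rw [ha, hb] at hconv
    rw [ha] at hmin
    have hreal : a + ‖p - x‖ ^ 2 / (2 * lam) ≤
        (1 - t) * a + t * b + ‖(1 - t) • p + t • u - x‖ ^ 2 / (2 * lam) := by
      have hE := hmin.trans (add_le_add_left hconv _)
      exact_mod_cast hE
    have hexpand : ‖(1 - t) • p + t • u - x‖ ^ 2 =
        ‖p - x‖ ^ 2 + 2 * t * ⟪p - x, u - p⟫ + t ^ 2 * ‖u - p‖ ^ 2 := by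
      rw [show (1 - t) • p + t • u - x = (p - x) + t • (u - p) by module, norm_add_sq_real,
        real_inner_smul_right, norm_smul, mul_pow, Real.norm_eq_abs, sq_abs]
      ring
    rw [hexpand] at hreal
    have hscaled : t * (lam * (a - b)) ≤ t * (⟪p - x, u - p⟫ + t / 2 * ‖u - p‖ ^ 2) := by
      field_simp at hreal
      linarith
    exact le_of_mul_le_mul_left hscaled ht₀
  have hlim : Tendsto (fun t : ℝ ↦ ⟪p - x, u - p⟫ + t / 2 * ‖u - p‖ ^ 2) (𝓝[>] 0)
      (𝓝 ⟪p - x, u - p⟫) :=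
    ((by fun_prop : Continuous fun t : ℝ ↦ ⟪p - x, u - p⟫ + t / 2 * ‖u - p‖ ^ 2).tendsto'
      0 _ (by simp)).mono_left nhdsWithin_le_nhds
  have hlimit : lam * (a - b) ≤ ⟪p - x, u - p⟫ :=
    ge_of_tendsto hlim (by filter_upwards [Ioc_mem_nhdsGT zero_lt_one] using hsegment)
  rw [← neg_sub p x, inner_neg_left]
  linarith

lemma IsProxMap.norm_sub_sq_le_inner (hprox : IsProxMap g lam prox) (hlam : 0 < lam)
    (hg_nebot : ∀ x, g x ≠ ⊥) (hg_proper : ∃ x, g x ≠ ⊤)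
    (hg_conv : ∀ x y : E, ∀ a b : ℝ, 0 ≤ a → 0 ≤ b → a + b = 1 →
      g (a • x + b • y) ≤ (a : EReal) * g x + (b : EReal) * g y) (x y : E) :
    ‖prox x - prox y‖ ^ 2 ≤ ⟪x - y, prox x - prox y⟫ := by
  obtain ⟨a, ha⟩ := hprox.exists_coe_eq hg_nebot hg_proper x
  obtain ⟨b, hb⟩ := hprox.exists_coe_eq hg_nebot hg_proper y
  have hx := hprox.inner_sub_le hlam hg_conv ha hb
  have hy := hprox.inner_sub_le hlam hg_conv hb ha
  have hsum : ⟪x - prox x, prox y - prox x⟫ + ⟪y - prox y, prox x - prox y⟫ =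
      ‖prox x - prox y‖ ^ 2 - ⟪x - y, prox x - prox y⟫ := by
    rw [← neg_sub (prox x) (prox y), inner_neg_right, neg_add_eq_sub,
      ← real_inner_self_eq_norm_sq, ← inner_sub_left, ← inner_sub_left]
    congr 1
    abel
  linarith

end Prox

theorem proxgrad_averaged_general {d : ℕ}
    (f : EuclideanSpace ℝ (Fin d) → ℝ)
    (f' : EuclideanSpace ℝ (Fin d) → EuclideanSpace ℝ (Fin d))
    (g : EuclideanSpace ℝ (Fin d) → EReal)
    (prox : EuclideanSpace ℝ (Fin d) → EuclideanSpace ℝ (Fin d))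
    (Lf lam : ℝ) (hLf : 0 < Lf)
    (hfconv : ConvexOn ℝ Set.univ f)
    (hfdiff : ∀ x, HasGradientAt f (f' x) x)
    (hflip : ∀ x y, ‖f' x - f' y‖ ≤ Lf * ‖x - y‖)
    (hg_nebot : ∀ x, g x ≠ ⊥)
    (hg_proper : ∃ x, g x ≠ ⊤)
    (hg_conv : ∀ x y : EuclideanSpace ℝ (Fin d), ∀ a b : ℝ, 0 ≤ a → 0 ≤ b → a + b = 1 →
      g (a • x + b • y) ≤ (a : EReal) * g x + (b : EReal) * g y)
    (hlam : lam ∈ Set.Ioo 0 (2 / Lf))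
    (hprox : ∀ x u : EuclideanSpace ℝ (Fin d),
      g (prox x) + ((‖prox x - x‖ ^ 2 / (2 * lam) : ℝ) : EReal) ≤
        g u + ((‖u - x‖ ^ 2 / (2 * lam) : ℝ) : EReal)) :
    ∃ T : EuclideanSpace ℝ (Fin d) → EuclideanSpace ℝ (Fin d),
      (∀ x y, ‖T x - T y‖ ≤ ‖x - y‖) ∧
        ∀ x, prox (x - lam • f' x) = ((2 - lam * Lf) / 4) • x + ((2 + lam * Lf) / 4) • T x := by
  obtain ⟨hlam₀, hlam₁⟩ := hlam
  have hθ₁ : lam * Lf / 2 ≤ 1 := by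
    rw [lt_div_iff₀ hLf] at hlam₁
    linarith
  have hprox_avg : IsAveraged (1 / 2) prox := isAveraged_half_of_firmlyNonexpansive
    (IsProxMap.norm_sub_sq_le_inner hprox hlam₀ hg_nebot hg_proper hg_conv)
  have hstep_avg : IsAveraged (lam * Lf / 2) (fun x ↦ x - lam • f' x) :=
    isAveraged_sub_smul_of_cocoercive hLf
      (hfconv.cocoercive_of_lipschitz_gradient hLf hfdiff hflip) lam
  obtain ⟨T, hT, hTeq⟩ := hprox_avg.comp_of_half hstep_avg (by positivity) hθ₁
  refine ⟨T, hT, fun x ↦ (hTeq x).trans ?_⟩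
  match_scalars <;> ring

/-- The prox-grad mapping `T_λ = prox_{λg} ∘ (I - λ∇f)` is `(2 + λ L_f)/4`-averaged for
`λ ∈ (0, 2/L_f)`, where `f` is convex and differentiable with `L_f`-Lipschitz gradient and
`g` is a proper, lower semicontinuous, convex extended-real-valued function. -/
theorem proxgrad_averaged {d : ℕ}
    (f : EuclideanSpace ℝ (Fin d) → ℝ)
    (f' : EuclideanSpace ℝ (Fin d) → EuclideanSpace ℝ (Fin d))
    (g : EuclideanSpace ℝ (Fin d) → EReal)
    (prox : EuclideanSpace ℝ (Fin d) → EuclideanSpace ℝ (Fin d))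
    (Lf lam : ℝ) (hLf : 0 < Lf)
    (hfconv : ConvexOn ℝ Set.univ f)
    (hfdiff : ∀ x, HasGradientAt f (f' x) x)
    (hflip : ∀ x y, ‖f' x - f' y‖ ≤ Lf * ‖x - y‖)
    (hg_nebot : ∀ x, g x ≠ ⊥)
    (hg_proper : ∃ x, g x ≠ ⊤)
    (hg_lsc : LowerSemicontinuous g)
    (hg_conv : ∀ x y : EuclideanSpace ℝ (Fin d), ∀ a b : ℝ, 0 ≤ a → 0 ≤ b → a + b = 1 →
      g (a • x + b • y) ≤ (a : EReal) * g x + (b : EReal) * g y)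
    (hlam : lam ∈ Set.Ioo 0 (2 / Lf))
    (hprox : ∀ x u : EuclideanSpace ℝ (Fin d),
      g (prox x) + ((‖prox x - x‖ ^ 2 / (2 * lam) : ℝ) : EReal) ≤
        g u + ((‖u - x‖ ^ 2 / (2 * lam) : ℝ) : EReal)) :
    ∃ T : EuclideanSpace ℝ (Fin d) → EuclideanSpace ℝ (Fin d),
      (∀ x y, ‖T x - T y‖ ≤ ‖x - y‖) ∧
        ∀ x, prox (x - lam • f' x) = ((2 - lam * Lf) / 4) • x + ((2 + lam * Lf) / 4) • T x :=
  proxgrad_averaged_general f f' g prox Lf lam hLf hfconv hfdiff hflip hg_nebot hg_proper hg_conv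
    hlam hprox
end

section
/- Let f : ℝⁿ → ℝ be convex and differentiable, let g : ℝⁿ → (−∞, +∞] be proper, lower semicontinuous and convex, and let λ > 0. Then a point x ∈ ℝⁿ minimizes f + g over ℝⁿ if and only if x is a fixed point of the prox-grad mapping, i.e., prox_{λg}(x − λ∇f(x)) = x. -/
/-! Both sides are equivalent to the variational inequality `g x ≤ g u + ⟪∇f x, u - x⟫` for all
`u`. A minimizer of `F + g`, with `F` differentiable at `x` and `g` convex, satisfies it: compare
`x` with the points `x + t • (u - x)` and let `t → 0⁺`. Conversely it yields minimality as soon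
as `F` lies above its tangent plane at `x`, which is where convexity of `f` enters. The
quadratic `‖· - y‖² / (2λ)` with `y = x - λ∇f x` also has gradient `∇f x` at `x`, so the same
inequality characterises `x` as a minimizer of `g + ‖· - y‖² / (2λ)`; the exact expansion of the
quadratic around `x` shows that this minimizer is unique, hence equal to `prox y`. -/

open Filter Topology Set
open scoped RealInnerProductSpace

theorem EReal.ne_top_of_add_coe_le_add_coe {a b : EReal} {r s : ℝ} (h : a + r ≤ b + s)
    (hb : b ≠ ⊤) : a ≠ ⊤ := by
  rintro rfl
  rw [EReal.top_add_coe, top_le_iff] at h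
  exact EReal.add_ne_top hb (EReal.coe_ne_top s) h

section

variable {E : Type*} [NormedAddCommGroup E] [InnerProductSpace ℝ E] {F : E → ℝ} {g : E → EReal}
  {p x : E}

theorem forall_add_le_of_le_add_inner
    (hF : ∀ u, F x + ⟪p, u - x⟫ ≤ F u) (hvi : ∀ u, g x ≤ g u + ⟪p, u - x⟫) (u : E) :
    (F x : EReal) + g x ≤ F u + g u :=
  calc (F x : EReal) + g x ≤ F x + (g u + ⟪p, u - x⟫) := add_le_add_right (hvi u) _
    _ = ((F x + ⟪p, u - x⟫ : ℝ) : EReal) + g u := by rw [EReal.coe_add]; abel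
    _ ≤ F u + g u := add_le_add_left (by exact_mod_cast hF u) _

theorem norm_sub_sq_eq_add_inner_add {y : E} {lam : ℝ} (hlam : lam ≠ 0)
    (hy : x - y = lam • p) (u : E) :
    ‖u - y‖ ^ 2 / (2 * lam) = ‖x - y‖ ^ 2 / (2 * lam) + ⟪p, u - x⟫ + ‖u - x‖ ^ 2 / (2 * lam) := by
  rw [show u - y = (u - x) + (x - y) by abel, norm_add_sq_real, hy, real_inner_smul_right,
    real_inner_comm]
  field_simp
  ring

theorem eq_of_add_sq_le_of_le_add_inner {y z : E} {lam : ℝ} (hlam : 0 < lam)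
    (hy : x - y = lam • p) (hx_top : g x ≠ ⊤) (hx_bot : g x ≠ ⊥)
    (hvi : ∀ u, g x ≤ g u + ⟪p, u - x⟫)
    (hz : g z + ((‖z - y‖ ^ 2 / (2 * lam) : ℝ) : EReal) ≤
      g x + ((‖x - y‖ ^ 2 / (2 * lam) : ℝ) : EReal)) :
    z = x := by
  obtain ⟨a, ha⟩ : ∃ a : ℝ, g x = a := ⟨_, (EReal.coe_toReal hx_top hx_bot).symm⟩
  have h : (a : EReal) + ((‖x - y‖ ^ 2 / (2 * lam) : ℝ) : EReal) +
      ((‖z - x‖ ^ 2 / (2 * lam) : ℝ) : EReal) ≤ a + ((‖x - y‖ ^ 2 / (2 * lam) : ℝ) : EReal) :=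
    calc _ ≤ g z + ⟪p, z - x⟫ + ((‖x - y‖ ^ 2 / (2 * lam) : ℝ) : EReal) +
          ((‖z - x‖ ^ 2 / (2 * lam) : ℝ) : EReal) := by
          rw [← ha]; gcongr; exact hvi z
      _ = g z + ((‖z - y‖ ^ 2 / (2 * lam) : ℝ) : EReal) := by
          rw [norm_sub_sq_eq_add_inner_add hlam.ne' hy z]; push_cast; abel
      _ ≤ _ := ha ▸ hz
  have hzx : ‖z - x‖ ^ 2 / (2 * lam) ≤ 0 := by
    have h' : a + ‖x - y‖ ^ 2 / (2 * lam) + ‖z - x‖ ^ 2 / (2 * lam) ≤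
        a + ‖x - y‖ ^ 2 / (2 * lam) := by exact_mod_cast h
    linarith
  simpa [hlam.ne', sub_eq_zero] using le_antisymm hzx (by positivity)

variable [CompleteSpace E]

theorem HasGradientAt.tendsto_slope_zero_right (hF : HasGradientAt F p x) (v : E) :
    Tendsto (fun t : ℝ => t⁻¹ * (F (x + t • v) - F x)) (𝓝[>] 0) (𝓝 ⟪p, v⟫) := by
  simpa using ((hasGradientAt_iff_hasFDerivAt.mp hF).hasLineDerivAt v).tendsto_slope_zero_right

theorem hasGradientAt_norm_sub_sq_div {y : E} {lam : ℝ} (hlam : lam ≠ 0)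
    (hy : x - y = lam • p) : HasGradientAt (fun u => ‖u - y‖ ^ 2 / (2 * lam)) p x := by
  rw [hasGradientAt_iff_hasFDerivAt]
  simp only [div_eq_mul_inv]
  refine (((hasFDerivAt_id x).sub_const y).norm_sq.mul_const (2 * lam)⁻¹).congr_fderiv ?_
  ext v
  simp [hy]
  field_simp

theorem ConvexOn.add_inner_le_of_hasGradientAt_s5 (hconv : ConvexOn ℝ univ F)
    (hF : HasGradientAt F p x) (u : E) : F x + ⟪p, u - x⟫ ≤ F u := by
  have hslope : ∀ t ∈ Ioc (0 : ℝ) 1, t⁻¹ * (F (x + t • (u - x)) - F x) ≤ F u - F x := by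
    rintro t ⟨ht0, ht1⟩
    have hseg := hconv.2 (mem_univ u) (mem_univ x) ht0.le (sub_nonneg.2 ht1) (add_sub_cancel t 1)
    rw [show t • u + (1 - t) • x = x + t • (u - x) by module, smul_eq_mul, smul_eq_mul] at hseg
    rw [inv_mul_le_iff₀ ht0]
    linarith
  linarith [le_of_tendsto (hF.tendsto_slope_zero_right (u - x))
    (eventually_of_mem (Ioc_mem_nhdsGT zero_lt_one) hslope)]

theorem le_add_inner_of_forall_add_le (hF : HasGradientAt F p x)
    (hg_conv : ∀ x y : E, ∀ a b : ℝ, 0 ≤ a → 0 ≤ b → a + b = 1 →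
      g (a • x + b • y) ≤ (a : EReal) * g x + (b : EReal) * g y)
    (hg_nebot : ∀ u, g u ≠ ⊥) (hx : g x ≠ ⊤) (hmin : ∀ u, (F x : EReal) + g x ≤ F u + g u)
    (u : E) : g x ≤ g u + ⟪p, u - x⟫ := by
  rcases eq_or_ne (g u) ⊤ with hu | hu
  · simp [hu]
  obtain ⟨a, ha⟩ : ∃ a : ℝ, g x = a := ⟨_, (EReal.coe_toReal hx (hg_nebot x)).symm⟩
  obtain ⟨b, hb⟩ : ∃ b : ℝ, g u = b := ⟨_, (EReal.coe_toReal hu (hg_nebot u)).symm⟩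
  have hslope : ∀ t ∈ Ioc (0 : ℝ) 1, a - b ≤ t⁻¹ * (F (x + t • (u - x)) - F x) := by
    rintro t ⟨ht0, ht1⟩
    have hseg := hg_conv u x t (1 - t) ht0.le (sub_nonneg.2 ht1) (add_sub_cancel t 1)
    rw [show t • u + (1 - t) • x = x + t • (u - x) by module, ha, hb] at hseg
    have hseg' : g (x + t • (u - x)) ≤ ((t * b + (1 - t) * a : ℝ) : EReal) := by
      exact_mod_cast hseg
    have h := (hmin (x + t • (u - x))).trans (add_le_add_right hseg' _)
    rw [ha] at h
    have h' : F x + a ≤ F (x + t • (u - x)) + (t * b + (1 - t) * a) := by exact_mod_cast h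
    rw [le_inv_mul_iff₀ ht0]
    linarith
  have hlim := ge_of_tendsto (hF.tendsto_slope_zero_right (u - x))
    (eventually_of_mem (Ioc_mem_nhdsGT zero_lt_one) hslope)
  rw [ha, hb]
  exact_mod_cast (by linarith : a ≤ b + ⟪p, u - x⟫)

end

theorem minimizer_iff_proxgrad_fixed_point_general {d : ℕ}
    (f : EuclideanSpace ℝ (Fin d) → ℝ)
    (f' : EuclideanSpace ℝ (Fin d) → EuclideanSpace ℝ (Fin d))
    (g : EuclideanSpace ℝ (Fin d) → EReal)
    (prox : EuclideanSpace ℝ (Fin d) → EuclideanSpace ℝ (Fin d))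
    (lam : ℝ) (hlam : 0 < lam)
    (hfconv : ConvexOn ℝ Set.univ f)
    (hfdiff : ∀ x, HasGradientAt f (f' x) x)
    (hg_nebot : ∀ x, g x ≠ ⊥)
    (hg_proper : ∃ x, g x ≠ ⊤)
    (hg_conv : ∀ x y : EuclideanSpace ℝ (Fin d), ∀ a b : ℝ, 0 ≤ a → 0 ≤ b → a + b = 1 →
      g (a • x + b • y) ≤ (a : EReal) * g x + (b : EReal) * g y)
    (hprox : ∀ x u : EuclideanSpace ℝ (Fin d),
      g (prox x) + ((‖prox x - x‖ ^ 2 / (2 * lam) : ℝ) : EReal) ≤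
        g u + ((‖u - x‖ ^ 2 / (2 * lam) : ℝ) : EReal))
    (x : EuclideanSpace ℝ (Fin d)) :
    (∀ u, (f x : EReal) + g x ≤ (f u : EReal) + g u) ↔ prox (x - lam • f' x) = x := by
  set y := x - lam • f' x
  have hy : x - y = lam • f' x := sub_sub_cancel x _
  obtain ⟨w, hw⟩ := hg_proper
  constructor
  · intro hmin
    have hx : g x ≠ ⊤ :=
      EReal.ne_top_of_add_coe_le_add_coe (by simpa only [add_comm] using hmin w) hw
    exact eq_of_add_sq_le_of_le_add_inner hlam hy hx (hg_nebot x)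
      (le_add_inner_of_forall_add_le (hfdiff x) hg_conv hg_nebot hx hmin) (hprox y x)
  · intro hfix
    have hmin_prox := hfix ▸ hprox y
    have hx : g x ≠ ⊤ := EReal.ne_top_of_add_coe_le_add_coe (hmin_prox w) hw
    have hvi := le_add_inner_of_forall_add_le (hasGradientAt_norm_sub_sq_div hlam.ne' hy)
      hg_conv hg_nebot hx (fun u => by simpa only [add_comm] using hmin_prox u)
    exact forall_add_le_of_le_add_inner (hfconv.add_inner_le_of_hasGradientAt_s5 (hfdiff x)) hvi

/-- Fixed-point characterization of minimizers: `x` minimizes `f + g` over ℝⁿ if and only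
if `x` is a fixed point of the prox-grad mapping, i.e. `prox_{λg}(x - λ∇f(x)) = x`, for
any `λ > 0`. Here `f` is convex and differentiable and `g` is proper, lower
semicontinuous and convex. -/
theorem minimizer_iff_proxgrad_fixed_point {d : ℕ}
    (f : EuclideanSpace ℝ (Fin d) → ℝ)
    (f' : EuclideanSpace ℝ (Fin d) → EuclideanSpace ℝ (Fin d))
    (g : EuclideanSpace ℝ (Fin d) → EReal)
    (prox : EuclideanSpace ℝ (Fin d) → EuclideanSpace ℝ (Fin d))
    (lam : ℝ) (hlam : 0 < lam)
    (hfconv : ConvexOn ℝ Set.univ f)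
    (hfdiff : ∀ x, HasGradientAt f (f' x) x)
    (hg_nebot : ∀ x, g x ≠ ⊥)
    (hg_proper : ∃ x, g x ≠ ⊤)
    (hg_lsc : LowerSemicontinuous g)
    (hg_conv : ∀ x y : EuclideanSpace ℝ (Fin d), ∀ a b : ℝ, 0 ≤ a → 0 ≤ b → a + b = 1 →
      g (a • x + b • y) ≤ (a : EReal) * g x + (b : EReal) * g y)
    (hprox : ∀ x u : EuclideanSpace ℝ (Fin d),
      g (prox x) + ((‖prox x - x‖ ^ 2 / (2 * lam) : ℝ) : EReal) ≤
        g u + ((‖u - x‖ ^ 2 / (2 * lam) : ℝ) : EReal))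
    (x : EuclideanSpace ℝ (Fin d)) :
    (∀ u, (f x : EReal) + g x ≤ (f u : EReal) + g u) ↔ prox (x - lam • f' x) = x :=
  minimizer_iff_proxgrad_fixed_point_general f f' g prox lam hlam hfconv hfdiff hg_nebot hg_proper
    hg_conv hprox x
end

section
/- Let {a_n} and {γ_n} be sequences of nonnegative real numbers, {α_n} a sequence in (0,1), and {σ_n} a real sequence such that a_{n+1} ≤ (1 − α_n)a_n + σ_n + γ_n for all n ≥ 1 and ∑_{n=1}^∞ γ_n < ∞. If ∑_{n=1}^∞ α_n = ∞ and limsup_{n→∞} σ_n/α_n ≤ 0, then a_n → 0 as n → ∞. -/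
open Filter

/-- Lemma 2.2(ii) (Xu): if `a (n+1) ≤ (1 - α n) * a n + σ n + γ n` with `{γ n}` summable,
`{α n} ⊂ (0,1)` with `∑ α n = ∞`, and `limsup σ n / α n ≤ 0`, then `a n → 0`. -/
theorem xu_lemma_tendsto_zero (a γ σ α : ℕ → ℝ)
    (ha : ∀ n, 0 ≤ a n) (hγ : ∀ n, 0 ≤ γ n)
    (hα : ∀ n, α n ∈ Set.Ioo (0 : ℝ) 1)
    (hrec : ∀ n ≥ 1, a (n + 1) ≤ (1 - α n) * a n + σ n + γ n)
    (hγsum : Summable γ)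
    (hαsum : Tendsto (fun N => ∑ i ∈ Finset.range N, α i) atTop atTop)
    (hlimsup : Filter.limsup (fun n => ((σ n / α n : ℝ) : EReal)) atTop ≤ 0) :
    Tendsto a atTop (nhds 0) := by
  have key : ∀ ε > (0:ℝ), ∀ᶠ n in atTop, a n < 3 * ε := by
    intro ε hε
    -- eventually σ n ≤ ε * α n
    have h1 : Filter.limsup (fun n => ((σ n / α n : ℝ) : EReal)) atTop < (ε : EReal) :=
      lt_of_le_of_lt hlimsup (by exact_mod_cast hε)
    have h2 := Filter.eventually_lt_of_limsup_lt h1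
    have hσev : ∀ᶠ n in atTop, σ n ≤ ε * α n := by
      filter_upwards [h2] with n hn
      have hlt : σ n / α n < ε := by exact_mod_cast hn
      have hαn := (hα n).1
      have := (div_lt_iff₀ hαn).mp hlt
      linarith
    obtain ⟨N₁, hN₁⟩ := eventually_atTop.mp hσev
    -- tail of γ is small
    have hts := hγsum.hasSum.tendsto_sum_nat
    obtain ⟨N₂, hN₂⟩ := (Metric.tendsto_atTop.mp hts) ε hε
    have htail : ∀ m ≥ N₂, (∑' i, γ i) - ∑ i ∈ Finset.range m, γ i < ε := by
      intro m hm
      have := hN₂ m hm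
      rw [Real.dist_eq, abs_lt] at this
      linarith [this.1]
    set N := max (max N₁ N₂) 1 with hN
    have hN1 : 1 ≤ N := le_max_right _ _
    have hNN₁ : N₁ ≤ N := le_trans (le_max_left _ _) (le_max_left _ _)
    have hNN₂ : N₂ ≤ N := le_trans (le_max_right _ _) (le_max_left _ _)
    -- γ partial tails bounded by ε
    have hSle : ∀ k, ∑ i ∈ Finset.range k, γ (N + i) < ε := by
      intro k
      have h3 : ∑ i ∈ Finset.range (N + k), γ i
          = ∑ i ∈ Finset.range N, γ i + ∑ i ∈ Finset.range k, γ (N + i) := by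
        rw [Finset.sum_range_add]
      have h4 : ∑ i ∈ Finset.range (N + k), γ i ≤ ∑' i, γ i :=
        Summable.sum_le_tsum _ (fun i _ => hγ i) hγsum
      have h5 : ∑ i ∈ Finset.range N₂, γ i ≤ ∑ i ∈ Finset.range N, γ i :=
        Finset.sum_le_sum_of_subset_of_nonneg (Finset.range_subset_range.mpr hNN₂)
          (fun i _ _ => hγ i)
      have h6 := htail N₂ le_rfl
      linarith
    -- main induction
    have hkey : ∀ k, a (N + k) ≤ (∏ i ∈ Finset.range k, (1 - α (N + i))) * a N + ε
        + ∑ i ∈ Finset.range k, γ (N + i) := by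
      intro k
      induction k with
      | zero =>
        simp only [Finset.range_zero, Finset.prod_empty, Finset.sum_empty, add_zero, one_mul,
          Nat.add_zero]
        linarith
      | succ k ih =>
        have hrc := hrec (N + k) (by omega)
        have hσ : σ (N + k) ≤ ε * α (N + k) := hN₁ _ (by omega)
        have hα1 := (hα (N + k)).1
        have hα2 := (hα (N + k)).2
        have hP : 0 ≤ ∏ i ∈ Finset.range k, (1 - α (N + i)) :=
          Finset.prod_nonneg (fun i _ => by linarith [(hα (N + i)).2])
        have hS : 0 ≤ ∑ i ∈ Finset.range k, γ (N + i) :=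
          Finset.sum_nonneg fun i _ => hγ _
        rw [Finset.prod_range_succ, Finset.sum_range_succ]
        have hmul : (1 - α (N + k)) * a (N + k)
            ≤ (1 - α (N + k)) * ((∏ i ∈ Finset.range k, (1 - α (N + i))) * a N + ε
              + ∑ i ∈ Finset.range k, γ (N + i)) :=
          mul_le_mul_of_nonneg_left ih (by linarith)
        have heq : N + (k + 1) = (N + k) + 1 := rfl
        rw [heq]
        have hαS : 0 ≤ α (N + k) * ∑ i ∈ Finset.range k, γ (N + i) :=
          mul_nonneg (le_of_lt hα1) hS
        nlinarith [hmul, hrc, hσ, hαS]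
    -- product tends to 0
    have hA : Tendsto (fun k => ∑ i ∈ Finset.range k, α (N + i)) atTop atTop := by
      have h1' : Tendsto (fun k => ∑ i ∈ Finset.range (k + N), α i) atTop atTop :=
        hαsum.comp (tendsto_add_atTop_nat N)
      have h2' : ∀ k, ∑ i ∈ Finset.range k, α (N + i)
          = ∑ i ∈ Finset.range (k + N), α i + -(∑ i ∈ Finset.range N, α i) := by
        intro k
        rw [add_comm k N, Finset.sum_range_add]
        ring
      simp_rw [h2']
      exact tendsto_atTop_add_const_right _ _ h1'
    have hPle : ∀ k, ∏ i ∈ Finset.range k, (1 - α (N + i))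
        ≤ Real.exp (-(∑ i ∈ Finset.range k, α (N + i))) := by
      intro k
      calc ∏ i ∈ Finset.range k, (1 - α (N + i))
          ≤ ∏ i ∈ Finset.range k, Real.exp (-(α (N + i))) :=
            Finset.prod_le_prod (fun i _ => by linarith [(hα (N + i)).2])
              (fun i _ => by linarith [Real.add_one_le_exp (-(α (N + i)))])
        _ = Real.exp (∑ i ∈ Finset.range k, -(α (N + i))) := (Real.exp_sum _ _).symm
        _ = Real.exp (-(∑ i ∈ Finset.range k, α (N + i))) := by rw [Finset.sum_neg_distrib]
    have hPnn : ∀ k, 0 ≤ ∏ i ∈ Finset.range k, (1 - α (N + i)) := fun k =>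
      Finset.prod_nonneg (fun i _ => by linarith [(hα (N + i)).2])
    have hexp : Tendsto (fun k => Real.exp (-(∑ i ∈ Finset.range k, α (N + i)))) atTop (nhds 0) :=
      Real.tendsto_exp_atBot.comp (tendsto_neg_atTop_atBot.comp hA)
    have hPtend : Tendsto (fun k => ∏ i ∈ Finset.range k, (1 - α (N + i))) atTop (nhds 0) :=
      squeeze_zero hPnn hPle hexp
    have hPmul : Tendsto (fun k => (∏ i ∈ Finset.range k, (1 - α (N + i))) * a N) atTop
        (nhds 0) := by
      have := hPtend.mul_const (a N)
      simpa using this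
    have hPev : ∀ᶠ k in atTop, (∏ i ∈ Finset.range k, (1 - α (N + i))) * a N < ε :=
      hPmul.eventually (Filter.Tendsto.eventually_lt_const hε tendsto_id) |>.mono (fun _ h => h)
    obtain ⟨K, hK⟩ := eventually_atTop.mp hPev
    rw [eventually_atTop]
    refine ⟨N + K, fun n hn => ?_⟩
    have hdec : N + (n - N) = n := by omega
    have h7 := hkey (n - N)
    have h8 := hK (n - N) (by omega)
    have h9 := hSle (n - N)
    rw [hdec] at h7
    linarith
  rw [NormedAddCommGroup.tendsto_nhds_zero]
  intro ε hε
  filter_upwards [key (ε / 3) (by positivity)] with n hn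
  rw [Real.norm_eq_abs, abs_of_nonneg (ha n)]
  linarith
end

section
/- (Baillon–Haddad) Let f : ℝⁿ → ℝ be convex and differentiable with L-Lipschitz continuous gradient (L > 0). Then ∇f is (1/L)-inverse strongly monotone: ⟨∇f(x) − ∇f(y), x − y⟩ ≥ (1/L)‖∇f(x) − ∇f(y)‖² for all x, y ∈ ℝⁿ. -/
open RealInnerProductSpace

/-!
Convexity gives the first-order lower bound `f x + ⟪∇f x, z - x⟫ ≤ f z`, and the `L`-Lipschitz
gradient gives the quadratic upper bound `f z ≤ f y + ⟪∇f y, z - y⟫ + L/2 ‖z - y‖²`.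
Evaluating both at the gradient step `z = y - L⁻¹ (∇f y - ∇f x)` sharpens the first-order bound
by `(2L)⁻¹ ‖∇f y - ∇f x‖²`; adding the sharpened bounds for `(x, y)` and `(y, x)` gives the claim.
-/

section

open Set

variable {F : Type*} [NormedAddCommGroup F] [InnerProductSpace ℝ F] [CompleteSpace F]
  {f : F → ℝ} {f' : F → F}

theorem le_add_of_hasDerivAt_le_mul {g g' : ℝ → ℝ} {c : ℝ} (hg : ∀ t, HasDerivAt g (g' t) t)
    (hg' : ∀ t ∈ Ioo (0 : ℝ) 1, g' t ≤ c * t) : g 1 ≤ g 0 + c / 2 := by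
  have hψ : ∀ t, HasDerivAt (fun t => g t - c / 2 * t ^ 2) (g' t - c * t) t := fun t =>
    ((hg t).sub ((hasDerivAt_pow 2 t).const_mul (c / 2))).congr_deriv (by push_cast; ring)
  have hanti : AntitoneOn (fun t => g t - c / 2 * t ^ 2) (Icc 0 1) :=
    antitoneOn_of_hasDerivWithinAt_nonpos (convex_Icc 0 1)
      (fun t _ => (hψ t).continuousAt.continuousWithinAt) (fun t _ => (hψ t).hasDerivWithinAt)
      (fun t ht => by rw [interior_Icc] at ht; linarith [hg' t ht])
  have := hanti (left_mem_Icc.2 zero_le_one) (right_mem_Icc.2 zero_le_one) zero_le_one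
  simp only at this
  linarith

theorem HasGradientAt.hasDerivAt_comp_add_smul {g x v : F} {t : ℝ}
    (h : HasGradientAt f g (x + t • v)) :
    HasDerivAt (fun s : ℝ => f (x + s • v)) ⟪g, v⟫ t := by
  have hline : HasDerivAt (fun s : ℝ => x + s • v) v t := by
    simpa using ((hasDerivAt_id t).smul_const v).const_add x
  simpa [InnerProductSpace.toDual_apply_apply, Function.comp_def] using
    h.hasFDerivAt.comp_hasDerivAt t hline

theorem ConvexOn.add_inner_sub_le_of_hasGradientAt {g x : F} (hf : ConvexOn ℝ univ f)
    (h : HasGradientAt f g x) (y : F) : f x + ⟪g, y - x⟫ ≤ f y := by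
  have hline : ConvexOn ℝ univ (fun t : ℝ => f (x + t • (y - x))) := by
    simpa [Function.comp_def, AffineMap.lineMap_apply, add_comm] using
      hf.comp_affineMap (AffineMap.lineMap x y)
  have hderiv : HasDerivAt (fun t : ℝ => f (x + t • (y - x))) ⟪g, y - x⟫ 0 :=
    HasGradientAt.hasDerivAt_comp_add_smul (by simpa using h)
  have := hline.le_slope_of_hasDerivAt (mem_univ 0) (mem_univ 1) one_pos hderiv
  simp only [slope_def_field, one_smul, add_sub_cancel, zero_smul, add_zero, sub_zero,
    div_one] at this
  linarith

theorem le_add_inner_sub_add_norm_sq_of_lipschitz_gradient {L : ℝ}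
    (hf : ∀ x, HasGradientAt f (f' x) x) (hlip : ∀ x y, ‖f' x - f' y‖ ≤ L * ‖x - y‖) (x y : F) :
    f y ≤ f x + ⟪f' x, y - x⟫ + L / 2 * ‖y - x‖ ^ 2 := by
  set v := y - x
  have hg : ∀ t : ℝ, HasDerivAt (fun t => f (x + t • v) - t * ⟪f' x, v⟫)
      ⟪f' (x + t • v) - f' x, v⟫ t := fun t => by
    rw [inner_sub_left]
    exact (hf _).hasDerivAt_comp_add_smul.sub (by simpa using (hasDerivAt_id t).mul_const _)
  have hg' : ∀ t ∈ Ioo (0 : ℝ) 1, ⟪f' (x + t • v) - f' x, v⟫ ≤ L * ‖v‖ ^ 2 * t := fun t ht =>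
    calc ⟪f' (x + t • v) - f' x, v⟫ ≤ ‖f' (x + t • v) - f' x‖ * ‖v‖ := real_inner_le_norm _ _
      _ ≤ L * ‖x + t • v - x‖ * ‖v‖ := by gcongr; exact hlip _ _
      _ = L * ‖v‖ ^ 2 * t := by
        rw [add_sub_cancel_left, norm_smul, Real.norm_of_nonneg ht.1.le]; ring
  have := le_add_of_hasDerivAt_le_mul hg hg'
  simp only [zero_smul, one_smul, add_zero, zero_mul, sub_zero, one_mul, v, add_sub_cancel] at this
  linarith

theorem ConvexOn.add_inner_sub_add_norm_sq_le_of_lipschitz_gradient {L : ℝ}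
    (hconv : ConvexOn ℝ univ f) (hf : ∀ x, HasGradientAt f (f' x) x)
    (hlip : ∀ x y, ‖f' x - f' y‖ ≤ L * ‖x - y‖) (x y : F) :
    f x + ⟪f' x, y - x⟫ + (2 * L)⁻¹ * ‖f' y - f' x‖ ^ 2 ≤ f y := by
  set g := f' y - f' x
  set z := y - L⁻¹ • g
  have hlower := hconv.add_inner_sub_le_of_hasGradientAt (hf x) z
  have hupper := le_add_inner_sub_add_norm_sq_of_lipschitz_gradient hf hlip y z
  have hzx : z - x = (y - x) - L⁻¹ • g := by simp only [z]; abel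
  have hzy : z - y = -(L⁻¹ • g) := by simp only [z]; abel
  have hgg : L⁻¹ * ⟪f' y, g⟫ - L⁻¹ * ⟪f' x, g⟫ = L⁻¹ * ‖g‖ ^ 2 := by
    rw [← mul_sub, ← inner_sub_left, real_inner_self_eq_norm_sq]
  have hL : L / 2 * (L⁻¹) ^ 2 = (2 * L)⁻¹ := by
    rcases eq_or_ne L 0 with rfl | hL
    · simp
    · field_simp
  have hhalf : (2 * L)⁻¹ * ‖g‖ ^ 2 = L⁻¹ * ‖g‖ ^ 2 - (2 * L)⁻¹ * ‖g‖ ^ 2 := by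
    rw [mul_inv]; ring
  rw [hzx, inner_sub_right, real_inner_smul_right] at hlower
  rw [hzy, inner_neg_right, real_inner_smul_right, norm_neg, norm_smul, mul_pow,
    Real.norm_eq_abs, sq_abs, ← mul_assoc, hL] at hupper
  linarith

end

theorem baillon_haddad_general {d : ℕ}
    (f : EuclideanSpace ℝ (Fin d) → ℝ)
    (f' : EuclideanSpace ℝ (Fin d) → EuclideanSpace ℝ (Fin d))
    (L : ℝ)
    (hconv : ConvexOn ℝ Set.univ f)
    (hdiff : ∀ x, HasGradientAt f (f' x) x)
    (hlip : ∀ x y, ‖f' x - f' y‖ ≤ L * ‖x - y‖) :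
    ∀ x y, (1 / L) * ‖f' x - f' y‖ ^ 2 ≤ ⟪f' x - f' y, x - y⟫ := by
  intro x y
  have hxy := hconv.add_inner_sub_add_norm_sq_le_of_lipschitz_gradient hdiff hlip x y
  have hyx := hconv.add_inner_sub_add_norm_sq_le_of_lipschitz_gradient hdiff hlip y x
  have hinner : ⟪f' x - f' y, x - y⟫ = -⟪f' x, y - x⟫ - ⟪f' y, x - y⟫ := by
    rw [inner_sub_left, ← neg_sub y x, inner_neg_right]
  have hhalf : (2 * L)⁻¹ + (2 * L)⁻¹ = L⁻¹ := by rw [mul_inv]; ring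
  rw [norm_sub_rev] at hxy
  rw [hinner, one_div, ← hhalf]
  linarith

/-- Baillon–Haddad: if `f : ℝⁿ → ℝ` is convex and differentiable with an `L`-Lipschitz
gradient (`L > 0`), then `∇f` is `1/L`-inverse strongly monotone. -/
theorem baillon_haddad {d : ℕ}
    (f : EuclideanSpace ℝ (Fin d) → ℝ)
    (f' : EuclideanSpace ℝ (Fin d) → EuclideanSpace ℝ (Fin d))
    (L : ℝ) (hL : 0 < L)
    (hconv : ConvexOn ℝ Set.univ f)
    (hdiff : ∀ x, HasGradientAt f (f' x) x)
    (hlip : ∀ x y, ‖f' x - f' y‖ ≤ L * ‖x - y‖) :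
    ∀ x y, (1 / L) * ‖f' x - f' y‖ ^ 2 ≤ ⟪f' x - f' y, x - y⟫ :=
  baillon_haddad_general f f' L hconv hdiff hlip
end

section
/- (Maingé sequence lemma) Let {Γ_n}_{n≥1} be a sequence of nonnegative real numbers that is not eventually nonincreasing, i.e., for every n₀ there exists n ≥ n₀ with Γ_n < Γ_{n+1}. Then there exists n₀ ∈ ℕ such that for every n ≥ n₀ the number τ(n) := max{k ∈ ℕ : k ≤ n and Γ_k ≤ Γ_{k+1}} is well defined, the map n ↦ τ(n) is nondecreasing with τ(n) → ∞ as n → ∞, and for all n ≥ n₀ both Γ_{τ(n)} ≤ Γ_{τ(n)+1} and Γ_n ≤ Γ_{τ(n)+1} hold. -/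
open Filter

/-- Maingé's sequence lemma: if a sequence `{Γ n}` of nonnegative reals (indexed by the
positive integers) is not eventually nonincreasing, then there are `n₀` and a map
`τ` with `τ n = max {k : 1 ≤ k ≤ n, Γ k ≤ Γ (k+1)}` for `n ≥ n₀`, `τ` nondecreasing on
`[n₀, ∞)`, `τ n → ∞`, and `Γ (τ n) ≤ Γ (τ n + 1)` as well as `Γ n ≤ Γ (τ n + 1)` for all
`n ≥ n₀`. -/
theorem mainge_sequence_lemma (Γ : ℕ → ℝ) (hpos : ∀ n, 0 ≤ Γ n)
    (hnd : ∀ n₀ : ℕ, ∃ n, n₀ ≤ n ∧ 1 ≤ n ∧ Γ n < Γ (n + 1)) :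
    ∃ n₀ : ℕ, 1 ≤ n₀ ∧ ∃ τ : ℕ → ℕ,
      (∀ n ≥ n₀, 1 ≤ τ n ∧ τ n ≤ n ∧ Γ (τ n) ≤ Γ (τ n + 1) ∧
        ∀ k, 1 ≤ k → k ≤ n → Γ k ≤ Γ (k + 1) → k ≤ τ n) ∧
      (∀ m n, n₀ ≤ m → m ≤ n → τ m ≤ τ n) ∧
      Tendsto τ atTop atTop ∧
      (∀ n ≥ n₀, Γ n ≤ Γ (τ n + 1)) := by
  classical
  set P : ℕ → Prop := fun k => Γ k ≤ Γ (k + 1) with hP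
  obtain ⟨n₁, -, hn₁1, hn₁P⟩ := hnd 1
  set τ : ℕ → ℕ := fun n => Nat.findGreatest P n with hτ
  have hPn₁ : P n₁ := le_of_lt hn₁P
  have hlow : ∀ n, n₁ ≤ n → n₁ ≤ τ n := fun n hn => Nat.le_findGreatest hn hPn₁
  have hspec : ∀ n, n₁ ≤ n → P (τ n) := fun n hn => Nat.findGreatest_spec hn hPn₁
  have hmax : ∀ n k, k ≤ n → P k → k ≤ τ n := fun n k hk hpk => Nat.le_findGreatest hk hpk
  have hle : ∀ n, τ n ≤ n := fun n => Nat.findGreatest_le n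
  refine ⟨n₁, hn₁1, τ, ?_, ?_, ?_, ?_⟩
  · intro n hn
    exact ⟨le_trans hn₁1 (hlow n hn), hle n, hspec n hn,
      fun k _ hk hpk => hmax n k hk hpk⟩
  · intro m n hm hmn
    exact Nat.findGreatest_mono (fun _ h => h) hmn
  · rw [tendsto_atTop_atTop]
    intro b
    obtain ⟨n, hbn, -, hnP⟩ := hnd b
    exact ⟨n, fun a ha => le_trans hbn (hmax a n ha (le_of_lt hnP))⟩
  · intro n hn
    have key : ∀ j, τ n ≤ j → j ≤ n → Γ j ≤ Γ (τ n + 1) := by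
      intro j hj
      induction j, hj using Nat.le_induction with
      | base => intro _; exact hspec n hn
      | succ j hj ih =>
        intro hjn
        rcases eq_or_lt_of_le hj with h | h
        · rw [← h]
        · have hnotP : ¬ P j := fun hpj =>
            absurd (hmax n j (le_of_lt hjn) hpj) (not_le.mpr h)
          exact le_trans (le_of_lt (not_le.mp hnotP)) (ih (le_of_lt hjn))
    exact key n (hle n) le_rfl
end

section
/- Consider the simple bilevel problem of minimizing h(x) = (x − 1)² over the solution set of min_{y∈ℝ} y². Its unique optimal solution is x = 0. However, for every λ > 0, the penalized function φ_λ(x) = (x − 1)² + λx² has the unique global minimizer x(λ) = 1/(1 + λ), and x(λ) ≠ 0 for all λ > 0; in particular, there is no λ > 0 for which 0 is a (local) minimizer of φ_λ, so partial calmness fails for this problem. -/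
/-- Failure of partial calmness for the simple bilevel problem of minimizing `(x-1)²`
over `argmin y²`: the unique bilevel optimal solution is `0` (the lower-level solution
set is `{0}`), but for every `λ > 0` the penalized function
`φ_λ(x) = (x-1)² + λ x²` has unique global minimizer `1/(1+λ) ≠ 0`; in particular there
is no `λ > 0` for which `0` is even a local minimizer of `φ_λ`. -/
theorem partial_calmness_fails :
    ({x : ℝ | ∀ w : ℝ, x ^ 2 ≤ w ^ 2} = {0}) ∧
      (∀ lam : ℝ, 0 < lam →
        (∀ x : ℝ, x ≠ 1 / (1 + lam) →
          (1 / (1 + lam) - 1) ^ 2 + lam * (1 / (1 + lam)) ^ 2 < (x - 1) ^ 2 + lam * x ^ 2) ∧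
        1 / (1 + lam) ≠ 0) ∧
      ¬ ∃ lam : ℝ, 0 < lam ∧ ∃ ε : ℝ, 0 < ε ∧ ∀ x : ℝ, |x| < ε →
          ((0 : ℝ) - 1) ^ 2 + lam * (0 : ℝ) ^ 2 ≤ (x - 1) ^ 2 + lam * x ^ 2 := by
  refine ⟨?_, ?_, ?_⟩
  · ext x
    simp only [Set.mem_setOf_eq, Set.mem_singleton_iff]
    constructor
    · intro h
      have := h 0
      nlinarith [sq_nonneg x]
    · rintro rfl w
      nlinarith [sq_nonneg w]
  · intro lam hlam
    have h1 : (0 : ℝ) < 1 + lam := by linarith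
    constructor
    · intro x hx
      have hx' : x - 1 / (1 + lam) ≠ 0 := sub_ne_zero.mpr hx
      have h2 : 0 < (x - 1 / (1 + lam)) ^ 2 := by positivity
      have h3 : (1 + lam) * (1 / (1 + lam)) = 1 := mul_one_div_cancel (ne_of_gt h1)
      nlinarith [sq_nonneg (x - 1 / (1 + lam))]
    · positivity
  · rintro ⟨lam, hlam, ε, hε, h⟩
    set x := min (ε / 2) (1 / (1 + lam)) with hx
    have h1 : (0 : ℝ) < 1 + lam := by linarith
    have hxpos : 0 < x := lt_min (by linarith) (by positivity)
    have hxε : x < ε := lt_of_le_of_lt (min_le_left _ _) (by linarith)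
    have hxle : x ≤ 1 / (1 + lam) := min_le_right _ _
    have hxlam : (1 + lam) * x ≤ 1 := by
      calc (1 + lam) * x ≤ (1 + lam) * (1 / (1 + lam)) := by nlinarith
        _ = 1 := mul_one_div_cancel (ne_of_gt h1)
    have := h x (by rwa [abs_of_pos hxpos])
    nlinarith
end

section
/- Let T : ℝⁿ → ℝⁿ be nonexpansive with T z = z for some z ∈ ℝⁿ, let α ∈ (0,1) and β ∈ (0,1), let y, w ∈ ℝⁿ, and set x⁺ = α w + (1 − α)(1 − β) y + β(1 − α) T(y). Then ‖x⁺ − z‖² ≤ (1 − α)²‖y − z‖² − β(1 − β)(1 − α)²‖y − T y‖² + 2α⟨w − z, x⁺ − z⟩. -/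
open RealInnerProductSpace

/-- One-step estimate: if `T` is nonexpansive with `T z = z`, `α, β ∈ (0,1)` and
`x⁺ = α w + (1-α)(1-β) y + β(1-α) T y`, then
`‖x⁺ - z‖² ≤ (1-α)²‖y - z‖² - β(1-β)(1-α)²‖y - T y‖² + 2α⟪w - z, x⁺ - z⟫`. -/
theorem one_step_estimate {d : ℕ}
    (T : EuclideanSpace ℝ (Fin d) → EuclideanSpace ℝ (Fin d))
    (hT : ∀ x y, ‖T x - T y‖ ≤ ‖x - y‖)
    (z : EuclideanSpace ℝ (Fin d)) (hz : T z = z)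
    (α β : ℝ) (hα : α ∈ Set.Ioo (0 : ℝ) 1) (hβ : β ∈ Set.Ioo (0 : ℝ) 1)
    (y w xp : EuclideanSpace ℝ (Fin d))
    (hxp : xp = α • w + ((1 - α) * (1 - β)) • y + (β * (1 - α)) • T y) :
    ‖xp - z‖ ^ 2 ≤ (1 - α) ^ 2 * ‖y - z‖ ^ 2 - β * (1 - β) * (1 - α) ^ 2 * ‖y - T y‖ ^ 2
      + 2 * α * ⟪w - z, xp - z⟫ := by
  obtain ⟨hα0, hα1⟩ := hα
  obtain ⟨hβ0, hβ1⟩ := hβ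
  set a := w - z with ha
  set b := y - z with hb
  set c := T y - z with hc
  have key : xp - z = α • a + ((1 - α) * (1 - β)) • b + (β * (1 - α)) • c := by
    rw [hxp, ha, hb, hc]; module
  have hbc : y - T y = b - c := by rw [hb, hc]; abel
  have hCB : ⟪c, c⟫ ≤ ⟪b, b⟫ := by
    have h := hT y z
    rw [hz] at h
    have h2 : ‖c‖ ^ 2 ≤ ‖b‖ ^ 2 := by
      have := norm_nonneg (T y - z)
      nlinarith [h]
    rwa [← real_inner_self_eq_norm_sq, ← real_inner_self_eq_norm_sq] at h2
  have hA : 0 ≤ ⟪a, a⟫ := real_inner_self_nonneg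
  rw [key, hbc, ← real_inner_self_eq_norm_sq, ← real_inner_self_eq_norm_sq,
    ← real_inner_self_eq_norm_sq]
  simp only [inner_add_left, inner_add_right, inner_sub_left, inner_sub_right,
    real_inner_smul_left, real_inner_smul_right]
  have s1 : ⟪b, a⟫ = ⟪a, b⟫ := (real_inner_comm b a).symm
  have s2 : ⟪c, a⟫ = ⟪a, c⟫ := (real_inner_comm c a).symm
  have s3 : ⟪c, b⟫ = ⟪b, c⟫ := (real_inner_comm c b).symm
  rw [s1, s2, s3]
  nlinarith [mul_nonneg (mul_nonneg (le_of_lt hβ0) (sq_nonneg (1 - α))) (sub_nonneg.mpr hCB),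
    mul_nonneg (sq_nonneg α) hA]
end
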